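/- arXiv:2109.13583 — 5 statements merged into one kernel-verified Lean document; each statement's English description precedes it below -/
import Mathlib

section
/- On the hexagonal lattice: suppose the inverse temperature sequence β = β_L satisfies e^{β_L} ≪ L^{2/3}. Then the Gibbs measure of the set of ground states vanishes: μ_{β_L}(S) = o_L(1) as L → ∞. -/
open scoped Classical BigOperators

namespace IsingHex

/-- Sites of the hexagonal lattice of side length `L` with periodic boundary conditions,
identified with the `2L²` triangular faces of the dual triangular lattice `Λ*`:
`(p, false)` is the up-triangle and `(p, true)` the down-triangle in the rhombic cell `p`. -/
abbrev Site (L : ℕ) : Type := (ZMod L × ZMod L) × Bool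

/-- Spin configurations `X = Ω^Λ` with spin set `Ω = Fin q`. -/
abbrev Conf (L q : ℕ) : Type := Site L → Fin q

/-- Adjacency of the hexagonal lattice: the up-triangle `(p, false)` is adjacent to the
down-triangles `(p, true)`, `(p - (1,0), true)` and `(p - (0,1), true)`. -/
def hexAdj {L : ℕ} (v w : Site L) : Prop :=
  (v.2 = false ∧ w.2 = true ∧
     (w.1 = v.1 ∨ w.1 = (v.1.1 - 1, v.1.2) ∨ w.1 = (v.1.1, v.1.2 - 1))) ∨
  (v.2 = true ∧ w.2 = false ∧
     (v.1 = w.1 ∨ v.1 = (w.1.1 - 1, w.1.2) ∨ v.1 = (w.1.1, w.1.2 - 1)))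

/-- The Hamiltonian `H(σ)`: the number of edges of `Λ` whose endpoints carry different
spins; each edge is counted exactly once through its unique up-triangle endpoint. -/
noncomputable def Ham (L q : ℕ) (σ : Conf L q) : ℕ :=
  Nat.card {e : Site L × Site L // e.1.2 = false ∧ hexAdj e.1 e.2 ∧ σ e.1 ≠ σ e.2}

/-- The monochromatic ground state `𝐚`. -/
def groundConf (L q : ℕ) (a : Fin q) : Conf L q := fun _ => a

/-- The set `S = {𝟏, …, 𝐪}` of ground states. -/
def groundSet (L q : ℕ) : Set (Conf L q) := {σ | ∃ a : Fin q, σ = groundConf L q a}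

/-- Partition function `Z_β`. -/
noncomputable def Zfun (L q : ℕ) (β : ℝ) : ℝ :=
  ∑' σ : Conf L q, Real.exp (-β * (Ham L q σ : ℝ))

/-- Gibbs measure of a set of configurations. -/
noncomputable def gibbsP (L q : ℕ) (β : ℝ) (A : Set (Conf L q)) : ℝ :=
  (∑' σ : Conf L q, A.indicator (fun ζ => Real.exp (-β * (Ham L q ζ : ℝ))) σ) / Zfun L q β

/-- `σ ∼ ζ`: the two configurations differ at exactly one site. -/
def oneFlip {L q : ℕ} (σ ζ : Conf L q) : Prop :=
  ∃ x : Site L, σ x ≠ ζ x ∧ ∀ y : Site L, y ≠ x → σ y = ζ y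

/-- Metropolis jump rates `c_β(σ, ζ)`. -/
noncomputable def rate (L q : ℕ) (β : ℝ) (σ ζ : Conf L q) : ℝ :=
  if oneFlip σ ζ then Real.exp (-β * max ((Ham L q ζ : ℝ) - (Ham L q σ : ℝ)) 0) else 0

/-- There is a `t`-path of single spin flips connecting `σ` and `ζ`. -/
def ConnBelow (L q : ℕ) (t : ℕ) (σ ζ : Conf L q) : Prop :=
  ∃ (N : ℕ) (ω : ℕ → Conf L q), ω 0 = σ ∧ ω N = ζ ∧
    (∀ n < N, oneFlip (ω n) (ω (n + 1))) ∧ ∀ n ≤ N, Ham L q (ω n) ≤ t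

/-- Communication height `Φ(σ, ζ)`. -/
noncomputable def commHeight (L q : ℕ) (σ ζ : Conf L q) : ℕ :=
  sInf {t : ℕ | ConnBelow L q t σ ζ}

/-- The strip of index `ℓ` in direction `d` (`0` = horizontal, `1` = vertical,
`2` = diagonal): `2L` consecutive triangles winding around the torus. -/
def stripSet (L : ℕ) (d : Fin 3) (ℓ : ZMod L) : Set (Site L) :=
  if d = 0 then {v | v.1.2 = ℓ}
  else if d = 1 then {v | v.1.1 = ℓ}
  else {v | (v.2 = false ∧ v.1.1 + v.1.2 = ℓ) ∨ (v.2 = true ∧ v.1.1 + v.1.2 = ℓ - 1)}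

/-- Strip energy `ΔH_s(σ)`: number of adjacent pairs inside the strip with different spins. -/
noncomputable def stripEnergy (L q : ℕ) (σ : Conf L q) (d : Fin 3) (ℓ : ZMod L) : ℕ :=
  Nat.card {e : Site L × Site L //
    e.1.2 = false ∧ e.1 ∈ stripSet L d ℓ ∧ e.2 ∈ stripSet L d ℓ ∧
      hexAdj e.1 e.2 ∧ σ e.1 ≠ σ e.2}

/-- The strip `(d, ℓ)` is an `a`-bridge of `σ`. -/
def IsBridgeWith (L q : ℕ) (σ : Conf L q) (d : Fin 3) (ℓ : ZMod L) (a : Fin q) : Prop :=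
  ∀ v ∈ stripSet L d ℓ, σ v = a

/-- The strip `(d, ℓ)` is a bridge of `σ`. -/
def IsBridge (L q : ℕ) (σ : Conf L q) (d : Fin 3) (ℓ : ZMod L) : Prop :=
  ∃ a : Fin q, IsBridgeWith L q σ d ℓ a

/-- Cyclic enumeration of the strip `(d, ℓ)` by `ZMod (2L)`, consecutive triangles
being adjacent. -/
def stripCycle (L : ℕ) (d : Fin 3) (ℓ : ZMod L) (k : ZMod (2 * L)) : Site L :=
  let t : ZMod L := ((k.val / 2 : ℕ) : ZMod L)
  if d = 0 then ((t, ℓ), decide (k.val % 2 = 1))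
  else if d = 1 then ((ℓ, t), decide (k.val % 2 = 1))
  else if k.val % 2 = 1 then ((t, ℓ - 1 - t), true) else ((t, ℓ - t), false)

/-- A set of triangles is an arc (a set of consecutive triangles) of the strip `(d, ℓ)`. -/
def IsArc (L : ℕ) (d : Fin 3) (ℓ : ZMod L) (S : Set (Site L)) : Prop :=
  ∃ (s : ZMod (2 * L)) (m : ℕ),
    S = (fun k : ℕ => stripCycle L d ℓ (s + (k : ZMod (2 * L)))) '' Set.Iio m

/-- The strip `(d, ℓ)` is an `{a,b}`-semibridge of `σ`: it carries exactly the two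
spins `a ≠ b`, and the sites carrying each spin are consecutive in the strip. -/
def IsSemibridgePair (L q : ℕ) (σ : Conf L q) (d : Fin 3) (ℓ : ZMod L) (a b : Fin q) : Prop :=
  a ≠ b ∧ (∀ v ∈ stripSet L d ℓ, σ v = a ∨ σ v = b) ∧
    (∃ v ∈ stripSet L d ℓ, σ v = a) ∧ (∃ v ∈ stripSet L d ℓ, σ v = b) ∧
    IsArc L d ℓ {v ∈ stripSet L d ℓ | σ v = a} ∧ IsArc L d ℓ {v ∈ stripSet L d ℓ | σ v = b}

/-- The strip `(d, ℓ)` is a semibridge of `σ`. -/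
def IsSemibridge (L q : ℕ) (σ : Conf L q) (d : Fin 3) (ℓ : ZMod L) : Prop :=
  ∃ a b : Fin q, IsSemibridgePair L q σ d ℓ a b

/-- `σ` has an `a`-cross: two `a`-bridges in different directions. -/
def HasCross (L q : ℕ) (σ : Conf L q) (a : Fin q) : Prop :=
  ∃ (d d' : Fin 3) (ℓ ℓ' : ZMod L),
    d ≠ d' ∧ IsBridgeWith L q σ d ℓ a ∧ IsBridgeWith L q σ d' ℓ' a

/-- `σ` is cross-free. -/
def CrossFree (L q : ℕ) (σ : Conf L q) : Prop := ∀ a : Fin q, ¬ HasCross L q σ a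

/-- Connected subsets of the torus `𝕋_L` of strip indices (the collection `𝔖_L`). -/
def CircConn (L : ℕ) (P : Set (ZMod L)) : Prop :=
  ∀ x ∈ P, ∀ y ∈ P, ∃ (N : ℕ) (γ : ℕ → ZMod L), γ 0 = x ∧ γ N = y ∧
    (∀ n ≤ N, γ n ∈ P) ∧ ∀ n < N, γ (n + 1) = γ n + 1 ∨ γ (n + 1) = γ n - 1

/-- Union of the strips with indices in `P`, in direction `d`. -/
def stripUnion (L : ℕ) (d : Fin 3) (P : Set (ZMod L)) : Set (Site L) :=
  ⋃ ℓ ∈ P, stripSet L d ℓ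

/-- The configuration `ξ^{a,b}_U`: spin `b` on `U` and spin `a` elsewhere. -/
noncomputable def xiConf (L q : ℕ) (a b : Fin q) (U : Set (Site L)) : Conf L q :=
  fun v => if v ∈ U then b else a

/-- `σ ∈ R_n^{a,b}`: a regular configuration between `𝐚` and `𝐛` built from `n` strips. -/
def IsRegular (L q : ℕ) (σ : Conf L q) (a b : Fin q) (n : ℕ) : Prop :=
  ∃ (d : Fin 3) (P : Set (ZMod L)), CircConn L P ∧ P.ncard = n ∧
    σ = xiConf L q a b (stripUnion L d P)

/-- The vertices (in the triangular lattice) of the triangle `v`. -/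
def triVerts (L : ℕ) (v : Site L) : Set (ZMod L × ZMod L) :=
  if v.2 = false then {v.1, (v.1.1 + 1, v.1.2), (v.1.1, v.1.2 + 1)}
  else {(v.1.1 + 1, v.1.2), (v.1.1, v.1.2 + 1), (v.1.1 + 1, v.1.2 + 1)}

/-- A connected set of triangles (connected through shared sides). -/
def ConnSet (L : ℕ) (U : Set (Site L)) : Prop :=
  ∀ x ∈ U, ∀ y ∈ U, ∃ (N : ℕ) (γ : ℕ → Site L), γ 0 = x ∧ γ N = y ∧
    (∀ n ≤ N, γ n ∈ U) ∧ ∀ n < N, hexAdj (γ n) (γ (n + 1))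

/-- A one-dimensional canonical set inside the strip `(d, ℓ)`. -/
def OneDimCanonical (L : ℕ) (d : Fin 3) (ℓ : ZMod L) (U : Set (Site L)) : Prop :=
  U ⊆ stripSet L d ℓ ∧ U.Nonempty ∧ U ≠ stripSet L d ℓ ∧
  (ConnSet L U ∨
    (Even U.ncard ∧ ∃ (U₁ : Set (Site L)) (y : Site L),
      U = U₁ ∪ {y} ∧ y ∉ U₁ ∧ U₁.Nonempty ∧ ConnSet L U₁ ∧
      (∀ x ∈ U₁, ¬ hexAdj x y) ∧ ∃ x ∈ U₁, (triVerts L x ∩ triVerts L y).Nonempty))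

/-- `P ≺ P'`: connected index sets with `P ⊆ P'` and `|P'| = |P| + 1`. -/
def StepPair (L : ℕ) (P P' : Set (ZMod L)) : Prop :=
  CircConn L P ∧ CircConn L P' ∧ P ⊆ P' ∧ P'.ncard = P.ncard + 1

/-- A protuberance attached to `s(P)` inside the strip `(d, ℓ)`: a one-dimensional
canonical set such that, when `1 ≤ |P| ≤ L-2`, at least half of its triangles share a
side with `s(P)`. -/
def IsProtuberance (L : ℕ) (d : Fin 3) (P : Set (ZMod L)) (ℓ : ZMod L)
    (U : Set (Site L)) : Prop :=
  OneDimCanonical L d ℓ U ∧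
    (1 ≤ P.ncard → P.ncard ≤ L - 2 →
      U.ncard ≤ 2 * {x ∈ U | ∃ y ∈ stripUnion L d P, hexAdj x y}.ncard)

/-- `‖σ‖_a`: the number of sites with spin `a`. -/
noncomputable def spinCount (L q : ℕ) (σ : Conf L q) (a : Fin q) : ℕ :=
  Nat.card {x : Site L // σ x = a}

/-- `N̂(S)`: configurations connected to a ground state by a `(2L+2)`-path. -/
def NHatGround (L q : ℕ) : Set (Conf L q) :=
  {ζ | ∃ a : Fin q, ConnBelow L q (2 * L + 2) (groundConf L q a) ζ}

/-- A nice pair of configurations (relative to the partition class `A`). -/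
def NicePair (L q : ℕ) (A : Finset (Fin q)) (σ ζ : Conf L q) : Prop :=
  σ ∉ NHatGround L q ∧ ζ ∉ NHatGround L q ∧ oneFlip σ ζ ∧
    (∑ a ∈ A, spinCount L q σ a) = L ^ 2 ∧ (∑ a ∈ A, spinCount L q ζ a) = L ^ 2 - 1

/-- `u` is the vector of mean hitting times `σ ↦ E_σ[τ_A]` of the Metropolis dynamics:
it vanishes on `A` and satisfies the first-step (harmonicity) equations off `A`. -/
def IsMeanHittingTime (L q : ℕ) (β : ℝ) (A : Set (Conf L q)) (u : Conf L q → ℝ) : Prop :=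
  (∀ σ ∈ A, u σ = 0) ∧
    ∀ σ ∉ A, (∑' ζ : Conf L q, rate L q β σ ζ) * u σ =
      1 + ∑' ζ : Conf L q, rate L q β σ ζ * u ζ

/-- Gibbs weight `μ_β(σ)`. -/
noncomputable def gibbsWeight (L q : ℕ) (β : ℝ) (σ : Conf L q) : ℝ :=
  Real.exp (-β * (Ham L q σ : ℝ)) / Zfun L q β

/-- The Dirichlet form `D_β(f)`. -/
noncomputable def dirichletForm (L q : ℕ) (β : ℝ) (f : Conf L q → ℝ) : ℝ :=
  (1 / 2) * ∑' p : Conf L q × Conf L q,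
    gibbsWeight L q β p.1 * rate L q β p.1 p.2 * (f p.2 - f p.1) ^ 2

/-- `h` is the equilibrium potential `h^β_{A,B}(σ) = P_σ[τ_A < τ_B]`: it equals `1` on
`A`, `0` on `B`, and is harmonic for the Metropolis dynamics off `A ∪ B`. -/
def IsEqPotential (L q : ℕ) (β : ℝ) (A B : Set (Conf L q)) (h : Conf L q → ℝ) : Prop :=
  (∀ σ ∈ A, h σ = 1) ∧ (∀ σ ∈ B, h σ = 0) ∧
    ∀ σ, σ ∉ A → σ ∉ B → (∑' ζ : Conf L q, rate L q β σ ζ * (h σ - h ζ)) = 0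


lemma Ham_groundConf (L q : ℕ) (a : Fin q) : Ham L q (groundConf L q a) = 0 := by
  have : IsEmpty {e : Site L × Site L // e.1.2 = false ∧ hexAdj e.1 e.2 ∧
      groundConf L q a e.1 ≠ groundConf L q a e.2} := ⟨fun e => e.2.2.2 rfl⟩
  exact Nat.card_of_isEmpty

lemma Ham_flip_le (L q : ℕ) (a b : Fin q) (p : ZMod L × ZMod L) :
    Ham L q (Function.update (groundConf L q a) ((p, false) : Site L) b) ≤ 3 := by
  set σ := Function.update (groundConf L q a) ((p, false) : Site L) b with hσ
  have hsub : {e : Site L × Site L | e.1.2 = false ∧ hexAdj e.1 e.2 ∧ σ e.1 ≠ σ e.2} ⊆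
      ({(((p, false) : Site L), ((p, true) : Site L)),
        (((p, false) : Site L), (((p.1 - 1, p.2), true) : Site L)),
        (((p, false) : Site L), (((p.1, p.2 - 1), true) : Site L))} :
        Set (Site L × Site L)) := by
    rintro ⟨v, w⟩ ⟨h1, h2, h3⟩
    rcases h2 with ⟨hv, hw, hcase⟩ | ⟨hv, -, -⟩
    · have hwne : w ≠ ((p, false) : Site L) := by
        intro h; rw [h] at hw; simp at hw
      have hv2 : v = ((p, false) : Site L) := by
        by_contra hne
        refine h3 ?_
        rw [hσ, Function.update_of_ne hne, Function.update_of_ne hwne]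
        rfl
      subst hv2
      obtain ⟨w1, w2⟩ := w
      simp only at hw hcase
      subst hw
      rcases hcase with h | h | h <;> subst h <;> simp
    · rw [h1] at hv; simp at hv
  have hcard : (({(((p, false) : Site L), ((p, true) : Site L)),
        (((p, false) : Site L), (((p.1 - 1, p.2), true) : Site L)),
        (((p, false) : Site L), (((p.1, p.2 - 1), true) : Site L))} :
        Set (Site L × Site L))).ncard ≤ 3 := by
    refine le_trans (Set.ncard_insert_le _ _) ?_
    have h2 := Set.ncard_insert_le (((p, false) : Site L), (((p.1 - 1, p.2), true) : Site L))
      ({(((p, false) : Site L), (((p.1, p.2 - 1), true) : Site L))} : Set (Site L × Site L))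
    simp only [Set.ncard_singleton] at h2 ⊢
    omega
  calc Ham L q σ
      = ({e : Site L × Site L | e.1.2 = false ∧ hexAdj e.1 e.2 ∧ σ e.1 ≠ σ e.2}).ncard :=
        (Nat.card_coe_set_eq _).symm
    _ ≤ _ := Set.ncard_le_ncard hsub (Set.toFinite _)
    _ ≤ 3 := hcard

lemma flip_injective (L q : ℕ) (a b : Fin q) (hab : a ≠ b) :
    Function.Injective (fun p : ZMod L × ZMod L =>
      Function.update (groundConf L q a) ((p, false) : Site L) b) := by
  intro p p' h
  by_contra hne
  have h1 : ((p, false) : Site L) ≠ ((p', false) : Site L) := by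
    simp [Prod.ext_iff, hne]
  have h2 := congrFun h ((p, false) : Site L)
  simp only [Function.update_self, Function.update_of_ne h1] at h2
  exact hab (by simpa [groundConf] using h2.symm)

/-- Theorem 3.2(2) (hexagonal lattice): if `e^{β_L} ≪ L^{2/3}` then the Gibbs measure
of the ground states vanishes, `μ_β(S) = o_L(1)`. -/
theorem gibbs_escape_high_temp (q : ℕ) (hq : 2 ≤ q) (β : ℕ → ℝ)
    (hβ : Filter.Tendsto β Filter.atTop Filter.atTop)
    (hcond : Filter.Tendsto (fun L : ℕ => Real.exp (β L) / (L : ℝ) ^ ((2 : ℝ) / 3))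
      Filter.atTop (nhds 0)) :
    Filter.Tendsto (fun L : ℕ => gibbsP L q (β L) (groundSet L q))
      Filter.atTop (nhds 0) := by
  have hub : Filter.Tendsto (fun L : ℕ =>
      (q : ℝ) * (Real.exp (β L) / (L : ℝ) ^ ((2 : ℝ) / 3)) ^ 3)
      Filter.atTop (nhds 0) := by
    have := (hcond.pow 3).const_mul (q : ℝ)
    simpa using this
  apply squeeze_zero' ?_ ?_ hub
  · refine Filter.Eventually.of_forall fun L => div_nonneg ?_ ?_
    · exact tsum_nonneg fun σ =>
        Set.indicator_nonneg (fun ζ _ => (Real.exp_nonneg _)) σ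
    · exact tsum_nonneg fun σ => Real.exp_nonneg _
  · filter_upwards [Filter.eventually_ge_atTop 1, hβ.eventually_ge_atTop 0] with L hL hβ0
    haveI : NeZero L := ⟨by omega⟩
    haveI : NeZero q := ⟨by omega⟩
    set b := β L with hb
    -- numerator bound
    have hnum : (∑' σ : Conf L q, (groundSet L q).indicator
        (fun ζ => Real.exp (-b * (Ham L q ζ : ℝ))) σ) ≤ (q : ℝ) := by
      rw [tsum_fintype]
      have step1 : ∑ σ : Conf L q, (groundSet L q).indicator
          (fun ζ => Real.exp (-b * (Ham L q ζ : ℝ))) σ ≤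
          ∑ σ : Conf L q, (if σ ∈ groundSet L q then (1 : ℝ) else 0) := by
        apply Finset.sum_le_sum
        intro σ _
        by_cases hσ : σ ∈ groundSet L q
        · rw [Set.indicator_of_mem hσ, if_pos hσ]
          obtain ⟨a, rfl⟩ := hσ
          simp [Ham_groundConf]
        · rw [Set.indicator_of_notMem hσ, if_neg hσ]
      refine le_trans step1 ?_
      rw [Finset.sum_boole]
      have hsub : Finset.univ.filter (fun σ : Conf L q => σ ∈ groundSet L q) ⊆
          Finset.image (groundConf L q) Finset.univ := by
        intro σ hσ
        simp only [Finset.mem_filter] at hσ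
        obtain ⟨a, rfl⟩ := hσ.2
        exact Finset.mem_image_of_mem _ (Finset.mem_univ a)
      have hcard : (Finset.univ.filter (fun σ : Conf L q => σ ∈ groundSet L q)).card ≤ q := by
        refine le_trans (Finset.card_le_card hsub) ?_
        refine le_trans Finset.card_image_le ?_
        simp
      exact_mod_cast hcard
    -- partition function lower bound
    have hZ : ((L : ℝ) ^ 2) * Real.exp (-(3 * b)) ≤ Zfun L q b := by
      rw [Zfun, tsum_fintype]
      have hinj := flip_injective L q (⟨0, by omega⟩ : Fin q) (⟨1, by omega⟩ : Fin q)
        (by simp [Fin.ext_iff])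
      calc ((L : ℝ) ^ 2) * Real.exp (-(3 * b))
          = ∑ _p : ZMod L × ZMod L, Real.exp (-(3 * b)) := by
            simp [Finset.sum_const, Finset.card_univ, ZMod.card, nsmul_eq_mul]
            push_cast
            ring
        _ ≤ ∑ p : ZMod L × ZMod L, Real.exp (-b *
              (Ham L q (Function.update (groundConf L q (⟨0, by omega⟩ : Fin q)) ((p, false) : Site L) (⟨1, by omega⟩ : Fin q)) : ℝ)) := by
            apply Finset.sum_le_sum
            intro p _
            apply Real.exp_le_exp.2
            have h3 : ((Ham L q (Function.update (groundConf L q (⟨0, by omega⟩ : Fin q))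
                ((p, false) : Site L) (⟨1, by omega⟩ : Fin q)) : ℝ)) ≤ 3 := by
              exact_mod_cast Ham_flip_le L q _ _ p
            nlinarith
        _ = ∑ σ ∈ Finset.image (fun p : ZMod L × ZMod L =>
              Function.update (groundConf L q (⟨0, by omega⟩ : Fin q)) ((p, false) : Site L)
                (⟨1, by omega⟩ : Fin q)) Finset.univ,
              Real.exp (-b * (Ham L q σ : ℝ)) :=
            (Finset.sum_image (f := fun σ : Conf L q => Real.exp (-b * (Ham L q σ : ℝ)))
              (fun x _ y _ h => hinj h)).symm
        _ ≤ ∑ σ : Conf L q, Real.exp (-b * (Ham L q σ : ℝ)) :=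
            Finset.sum_le_sum_of_subset_of_nonneg (Finset.subset_univ _)
              (fun σ _ _ => Real.exp_nonneg _)
    have hLpos : (0 : ℝ) < (L : ℝ) := by
      exact_mod_cast Nat.lt_of_lt_of_le Nat.zero_lt_one hL
    have hDpos : (0 : ℝ) < ((L : ℝ) ^ 2) * Real.exp (-(3 * b)) := by positivity
    have hmain : gibbsP L q b (groundSet L q) ≤
        (q : ℝ) / (((L : ℝ) ^ 2) * Real.exp (-(3 * b))) := by
      rw [gibbsP]
      exact div_le_div₀ (by positivity) hnum hDpos hZ
    refine le_trans hmain (le_of_eq ?_)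
    have hpow : ((L : ℝ) ^ ((2 : ℝ) / 3)) ^ (3 : ℕ) = (L : ℝ) ^ (2 : ℕ) := by
      rw [← Real.rpow_natCast ((L : ℝ) ^ ((2 : ℝ) / 3)) 3, ← Real.rpow_mul hLpos.le]
      norm_num
    have hexp : Real.exp b ^ (3 : ℕ) = Real.exp (3 * b) := by
      rw [← Real.exp_nat_mul]
      norm_num
    rw [div_pow, hpow, hexp, Real.exp_neg]
    field_simp
  

end IsingHex
end

section
/- On the hexagonal lattice: suppose e^{β_L} ≪ L^{2/3}, fix a constant α ∈ (0,1), and suppose in addition that e^{β_L} ≪ L^{(2/3)(1−α)}. Then for every constant c > 0, μ_{β_L}(X_{[0, cL^{2α}]}) = o_L(1) as L → ∞. -/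
open scoped Classical BigOperators

namespace IsingHex

/-- count of broken edges around one up-triangle, parametrized abstractly -/
def cnt (q : ℕ) (b₁ b₂ b₃ a : Fin q) : ℕ :=
  (if a ≠ b₁ then 1 else 0) + (if a ≠ b₂ then 1 else 0) + (if a ≠ b₃ then 1 else 0)

noncomputable def nloc (L q : ℕ) [NeZero L] (σ : Conf L q) (p : ZMod L × ZMod L) : ℕ :=
  cnt q (σ (p, true)) (σ ((p.1 - 1, p.2), true)) (σ ((p.1, p.2 - 1), true)) (σ (p, false))

lemma ham_eq (L q : ℕ) [NeZero L] (hL : 2 ≤ L) (σ : Conf L q) :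
    Ham L q σ = ∑ p : ZMod L × ZMod L, nloc L q σ p := by
  haveI : Fact (1 < L) := ⟨by omega⟩
  have h10 : (1 : ZMod L) ≠ 0 := one_ne_zero
  have hx : ∀ a : ZMod L, a - 1 ≠ a := fun a h => h10 (by linear_combination -h)
  classical
  rw [Ham, Nat.card_eq_fintype_card, Fintype.card_subtype]
  rw [Finset.card_eq_sum_card_fiberwise
    (f := fun e : Site L × Site L => e.1.1) (t := Finset.univ) (fun x _ => Finset.mem_univ _)]
  refine Finset.sum_congr rfl fun p _ => ?_
  have hset : (Finset.univ.filter
        (fun e : Site L × Site L => e.1.2 = false ∧ hexAdj e.1 e.2 ∧ σ e.1 ≠ σ e.2)).filter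
        (fun e => e.1.1 = p)
      = ({(((p, false) : Site L), ((p, true) : Site L)),
          ((p, false), ((p.1 - 1, p.2), true)),
          ((p, false), ((p.1, p.2 - 1), true))} : Finset (Site L × Site L)).filter
        (fun e => σ e.1 ≠ σ e.2) := by
    ext e
    rcases e with ⟨⟨p1, b1⟩, ⟨p2, b2⟩⟩
    simp only [Finset.mem_filter, Finset.mem_univ, true_and, Finset.mem_insert,
      Finset.mem_singleton]
    constructor
    · rintro ⟨⟨hf, hadj, hne⟩, hp⟩
      obtain rfl : b1 = false := hf
      obtain rfl : p1 = p := hp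
      rcases hadj with ⟨-, ht, hor⟩ | ⟨ht, -, -⟩
      · obtain rfl : b2 = true := ht
        rcases hor with h | h | h
        · obtain rfl : p2 = p1 := h
          exact ⟨Or.inl rfl, hne⟩
        · obtain rfl : p2 = (p1.1 - 1, p1.2) := h
          exact ⟨Or.inr (Or.inl rfl), hne⟩
        · obtain rfl : p2 = (p1.1, p1.2 - 1) := h
          exact ⟨Or.inr (Or.inr rfl), hne⟩
      · exact absurd (ht : false = true) (by simp)
    · rintro ⟨h, hne⟩
      rcases h with h | h | h <;> simp only [Prod.mk.injEq] at h <;>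
        obtain ⟨⟨rfl, rfl⟩, rfl, rfl⟩ := h
      · exact ⟨⟨rfl, Or.inl ⟨rfl, rfl, Or.inl rfl⟩, hne⟩, rfl⟩
      · exact ⟨⟨rfl, Or.inl ⟨rfl, rfl, Or.inr (Or.inl rfl)⟩, hne⟩, rfl⟩
      · exact ⟨⟨rfl, Or.inl ⟨rfl, rfl, Or.inr (Or.inr rfl)⟩, hne⟩, rfl⟩
  rw [hset]
  have hd1 : ((p, true) : Site L) ≠ ((p.1 - 1, p.2), true) := fun h =>
    hx p.1 (congrArg (fun z : Site L => z.1.1) h).symm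
  have hd2 : ((p, true) : Site L) ≠ ((p.1, p.2 - 1), true) := fun h =>
    hx p.2 (congrArg (fun z : Site L => z.1.2) h).symm
  have hd3 : (((p.1 - 1, p.2), true) : Site L) ≠ ((p.1, p.2 - 1), true) := fun h =>
    hx p.1 (congrArg (fun z : Site L => z.1.1) h)
  rw [Finset.filter_insert, Finset.filter_insert, Finset.filter_singleton]
  unfold nloc cnt
  by_cases h1 : σ ((p : ZMod L × ZMod L), false) ≠ σ (p, true) <;>
    by_cases h2 : σ ((p : ZMod L × ZMod L), false) ≠ σ ((p.1 - 1, p.2), true) <;>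
    by_cases h3 : σ ((p : ZMod L × ZMod L), false) ≠ σ ((p.1, p.2 - 1), true) <;>
    simp [h1, h2, h3, Finset.card_insert_of_notMem, hd1, hd2, hd3, Prod.ext_iff]

def splitE (L q : ℕ) : Conf L q ≃ ((ZMod L × ZMod L → Fin q) × (ZMod L × ZMod L → Fin q)) where
  toFun σ := (fun p => σ (p, true), fun p => σ (p, false))
  invFun x := fun v => cond v.2 (x.1 v.1) (x.2 v.1)
  left_inv σ := by funext v; rcases v with ⟨p, b⟩; cases b <;> rfl
  right_inv x := rfl

lemma zfun_factor (L q : ℕ) [NeZero L] (hL : 2 ≤ L) (β : ℝ) :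
    Zfun L q β = ∑ τ : ZMod L × ZMod L → Fin q, ∏ p : ZMod L × ZMod L,
      ∑ a : Fin q, Real.exp (-β *
        (cnt q (τ p) (τ (p.1 - 1, p.2)) (τ (p.1, p.2 - 1)) a : ℝ)) := by
  classical
  rw [Zfun, tsum_fintype]
  rw [← Equiv.sum_comp (splitE L q).symm (fun σ => Real.exp (-β * (Ham L q σ : ℝ)))]
  rw [Fintype.sum_prod_type]
  refine Finset.sum_congr rfl fun τ _ => ?_
  conv_rhs => rw [Finset.prod_univ_sum]
  rw [Fintype.piFinset_univ]
  refine Finset.sum_congr rfl fun υ _ => ?_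
  rw [ham_eq L q hL]
  have h1 : ∀ p : ZMod L × ZMod L, nloc L q ((splitE L q).symm (τ, υ)) p
      = cnt q (τ p) (τ (p.1 - 1, p.2)) (τ (p.1, p.2 - 1)) (υ p) := fun p => rfl
  rw [Nat.cast_sum, Finset.mul_sum, Real.exp_sum]
  exact Finset.prod_congr rfl fun p _ => by rw [h1]

lemma scalar1 (x m e3 : ℝ) (hx0 : 0 < x) (hx1 : x ≤ 1) (hm : 1 ≤ m)
    (he3 : e3 ≤ 1/16) (he3p : 0 < e3) :
    (1 + x/4) * (1 + m * (x * e3)) ≤ 1 + m * x := by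
  have hmx : 0 ≤ m * x := by nlinarith
  have hA : m * x * e3 ≤ m * x * (1/16) := mul_le_mul_of_nonneg_left he3 hmx
  have hB : x * (m * (x * e3)) ≤ m * x * e3 := by
    have h := mul_le_mul_of_nonneg_left hx1 (mul_nonneg hmx he3p.le)
    nlinarith [h]
  have hC : x ≤ m * x := by nlinarith
  nlinarith [hA, hB, hC, hmx]

lemma key_ineq (q : ℕ) (hq : 2 ≤ q) (β : ℝ) (hβ : 0 ≤ β) (b₁ b₂ b₃ : Fin q) :
    (1 + Real.exp (-(3 * β)) / 4) *
        ∑ a : Fin q, Real.exp (-(β + 1) * (cnt q b₁ b₂ b₃ a : ℝ)) ≤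
      ∑ a : Fin q, Real.exp (-β * (cnt q b₁ b₂ b₃ a : ℝ)) := by
  classical
  have hx0 : 0 < Real.exp (-(3 * β)) := Real.exp_pos _
  have hx1 : Real.exp (-(3 * β)) ≤ 1 := Real.exp_le_one_iff.mpr (by linarith)
  by_cases hb : b₂ = b₁ ∧ b₃ = b₁
  · obtain ⟨h2, h3⟩ := hb
    have hc : ∀ a : Fin q, cnt q b₁ b₂ b₃ a = if a = b₁ then 0 else 3 := by
      intro a; unfold cnt; by_cases h : a = b₁ <;> simp [h, h2, h3]
    have hsum : ∀ γ : ℝ, (∑ a : Fin q, Real.exp (-γ * (cnt q b₁ b₂ b₃ a : ℝ)))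
        = 1 + ((q : ℝ) - 1) * Real.exp (-γ * 3) := by
      intro γ
      rw [← Finset.sum_erase_add _ _ (Finset.mem_univ b₁)]
      have e1 : Real.exp (-γ * (cnt q b₁ b₂ b₃ b₁ : ℝ)) = 1 := by
        rw [hc b₁]; simp
      have e2 : ∀ a ∈ Finset.univ.erase b₁,
          Real.exp (-γ * (cnt q b₁ b₂ b₃ a : ℝ)) = Real.exp (-γ * 3) := by
        intro a ha
        rw [hc a, if_neg (Finset.ne_of_mem_erase ha)]; norm_num
      rw [e1, Finset.sum_congr rfl e2, Finset.sum_const, Finset.card_erase_of_mem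
        (Finset.mem_univ b₁), Finset.card_univ, Fintype.card_fin]
      have : ((q - 1 : ℕ) : ℝ) = (q : ℝ) - 1 := by
        have : 1 ≤ q := by omega
        push_cast [this]; ring
      rw [nsmul_eq_mul, this]; ring
    rw [hsum, hsum]
    have h3 : Real.exp (-(β + 1) * 3) = Real.exp (-(3 * β)) * Real.exp (-3) := by
      rw [← Real.exp_add]; ring_nf
    have h4 : Real.exp (-β * 3) = Real.exp (-(3 * β)) := by ring_nf
    rw [h3, h4]
    have he3 : Real.exp (-3 : ℝ) ≤ 1 / 16 := by
      have h16 : (16 : ℝ) ≤ Real.exp 3 := by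
        have h1 : Real.exp (3 : ℝ) = Real.exp 1 ^ (3 : ℕ) := by
          rw [← Real.exp_nat_mul]; norm_num
        have hgt := Real.exp_one_gt_d9
        have hcube : (2.7182818283:ℝ)^(3:ℕ) ≤ Real.exp 1 ^ (3:ℕ) := by
          apply pow_le_pow_left₀ (by norm_num) hgt.le
        rw [h1]
        norm_num at hcube ⊢
        linarith
      rw [Real.exp_neg, one_div]
      exact inv_anti₀ (by norm_num) h16
    have he3p : 0 < Real.exp (-3 : ℝ) := Real.exp_pos _
    have hm : (1 : ℝ) ≤ (q : ℝ) - 1 := by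
      have : (2 : ℝ) ≤ (q : ℝ) := by exact_mod_cast hq
      linarith
    exact scalar1 _ _ _ hx0 hx1 hm he3 he3p
  · have hc : ∀ a : Fin q, 1 ≤ cnt q b₁ b₂ b₃ a := by
      intro a
      unfold cnt
      split_ifs with h1 h2 h3 <;> try omega
      all_goals first
        | omega
        | (exact absurd ⟨(not_not.mp h2).symm.trans (not_not.mp h1),
            (not_not.mp h3).symm.trans (not_not.mp h1)⟩ hb)
    rw [Finset.mul_sum]
    refine Finset.sum_le_sum fun a _ => ?_
    have hn : (1 : ℝ) ≤ (cnt q b₁ b₂ b₃ a : ℝ) := by exact_mod_cast hc a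
    have hE : Real.exp (-β * (cnt q b₁ b₂ b₃ a : ℝ))
        = Real.exp ((cnt q b₁ b₂ b₃ a : ℝ)) * Real.exp (-(β + 1) * (cnt q b₁ b₂ b₃ a : ℝ)) := by
      rw [← Real.exp_add]; ring_nf
    rw [hE]
    have h2 : (1 + Real.exp (-(3 * β)) / 4) ≤ Real.exp ((cnt q b₁ b₂ b₃ a : ℝ)) := by
      have : Real.exp 1 ≤ Real.exp ((cnt q b₁ b₂ b₃ a : ℝ)) := Real.exp_le_exp.mpr hn
      have h21 : (2 : ℝ) ≤ Real.exp 1 := by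
        have := Real.add_one_le_exp (1 : ℝ); linarith
      linarith
    exact mul_le_mul_of_nonneg_right h2 (le_of_lt (Real.exp_pos _))

lemma zfun_ratio (L q : ℕ) [NeZero L] (hL : 2 ≤ L) (hq : 2 ≤ q) (β : ℝ) (hβ : 0 ≤ β) :
    (1 + Real.exp (-(3 * β)) / 4) ^ (L * L) * Zfun L q (β + 1) ≤ Zfun L q β := by
  classical
  rw [zfun_factor L q hL, zfun_factor L q hL, Finset.mul_sum]
  refine Finset.sum_le_sum fun τ _ => ?_
  have hcard : (Finset.univ : Finset (ZMod L × ZMod L)).card = L * L := by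
    rw [Finset.card_univ, Fintype.card_prod, ZMod.card]
  calc (1 + Real.exp (-(3 * β)) / 4) ^ (L * L) *
        ∏ p : ZMod L × ZMod L, ∑ a : Fin q,
          Real.exp (-(β + 1) * (cnt q (τ p) (τ (p.1 - 1, p.2)) (τ (p.1, p.2 - 1)) a : ℝ))
      = ∏ p : ZMod L × ZMod L, ((1 + Real.exp (-(3 * β)) / 4) *
          ∑ a : Fin q,
            Real.exp (-(β + 1) * (cnt q (τ p) (τ (p.1 - 1, p.2)) (τ (p.1, p.2 - 1)) a : ℝ))) := by
        rw [Finset.prod_mul_distrib, Finset.prod_const, hcard]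
    _ ≤ ∏ p : ZMod L × ZMod L, ∑ a : Fin q,
          Real.exp (-β * (cnt q (τ p) (τ (p.1 - 1, p.2)) (τ (p.1, p.2 - 1)) a : ℝ)) := by
        refine Finset.prod_le_prod (fun p _ => ?_) (fun p _ => ?_)
        · have h1 : (0:ℝ) < 1 + Real.exp (-(3 * β)) / 4 := by positivity
          have h2 : (0:ℝ) ≤ ∑ a : Fin q,
              Real.exp (-(β + 1) * (cnt q (τ p) (τ (p.1 - 1, p.2)) (τ (p.1, p.2 - 1)) a : ℝ)) :=
            Finset.sum_nonneg fun a _ => (Real.exp_pos _).le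
          positivity
        · exact key_ineq q hq β hβ _ _ _

lemma zfun_pos (L q : ℕ) [NeZero L] (hq : 2 ≤ q) (β : ℝ) : 0 < Zfun L q β := by
  rw [Zfun, tsum_fintype]
  exact Finset.sum_pos (fun σ _ => Real.exp_pos _)
    ⟨fun _ => ⟨0, by omega⟩, Finset.mem_univ _⟩

lemma main_bound (L q : ℕ) (hL : 2 ≤ L) (hq : 2 ≤ q) (β B : ℝ) (hβ : 0 ≤ β) :
    gibbsP L q β {σ : Conf L q | (Ham L q σ : ℝ) ≤ B} ≤
      Real.exp (B - (L : ℝ) ^ 2 * Real.exp (-(3 * β)) / 8) := by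
  classical
  haveI : NeZero L := ⟨by omega⟩
  set x := Real.exp (-(3 * β)) with hxdef
  have hx0 : 0 < x := Real.exp_pos _
  have hx1 : x ≤ 1 := Real.exp_le_one_iff.mpr (by linarith)
  have hZ1 : 0 < Zfun L q (β + 1) := zfun_pos L q hq _
  have hD : (0:ℝ) < (1 + x / 4) ^ (L * L) := by positivity
  have hZratio := zfun_ratio L q hL hq β hβ
  have hZβ : 0 < Zfun L q β := zfun_pos L q hq _
  have hnum : (∑' σ : Conf L q, ({σ : Conf L q | (Ham L q σ : ℝ) ≤ B}).indicator
        (fun ζ => Real.exp (-β * (Ham L q ζ : ℝ))) σ) ≤ Real.exp B * Zfun L q (β + 1) := by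
    rw [tsum_fintype, Zfun, tsum_fintype, Finset.mul_sum]
    refine Finset.sum_le_sum fun σ _ => ?_
    by_cases hσ : (Ham L q σ : ℝ) ≤ B
    · rw [Set.indicator_of_mem (by exact hσ)]
      have hE : Real.exp (-β * (Ham L q σ : ℝ))
          = Real.exp ((Ham L q σ : ℝ)) * Real.exp (-(β + 1) * (Ham L q σ : ℝ)) := by
        rw [← Real.exp_add]; ring_nf
      rw [hE]
      exact mul_le_mul_of_nonneg_right (Real.exp_le_exp.mpr hσ) (Real.exp_pos _).le
    · rw [Set.indicator_of_notMem (by exact hσ)]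
      positivity
  have hnum0 : (0:ℝ) ≤ ∑' σ : Conf L q, ({σ : Conf L q | (Ham L q σ : ℝ) ≤ B}).indicator
      (fun ζ => Real.exp (-β * (Ham L q ζ : ℝ))) σ := by
    rw [tsum_fintype]
    exact Finset.sum_nonneg fun σ _ => Set.indicator_nonneg
      (fun ζ _ => (Real.exp_pos _).le) _
  have hfac : Real.exp ((L : ℝ) ^ 2 * x / 8) ≤ (1 + x / 4) ^ (L * L) := by
    have hE : 0 < Real.exp (x / 8) := Real.exp_pos _
    have h1 : (-(x / 8) + 1) * Real.exp (x / 8) ≤ 1 := by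
      have h2 := mul_le_mul_of_nonneg_right (Real.add_one_le_exp (-(x / 8))) hE.le
      rwa [Real.exp_neg, inv_mul_cancel₀ hE.ne'] at h2
    have hstep : Real.exp (x / 8) ≤ 1 + x / 4 := by nlinarith [hE, hx0, hx1, h1]
    calc Real.exp ((L : ℝ) ^ 2 * x / 8) = Real.exp (x / 8) ^ (L * L) := by
          rw [← Real.exp_nat_mul]
          congr 1
          push_cast
          ring
      _ ≤ (1 + x / 4) ^ (L * L) := pow_le_pow_left₀ hE.le hstep _
  rw [gibbsP]
  calc (∑' σ : Conf L q, ({σ : Conf L q | (Ham L q σ : ℝ) ≤ B}).indicator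
        (fun ζ => Real.exp (-β * (Ham L q ζ : ℝ))) σ) / Zfun L q β
      ≤ (Real.exp B * Zfun L q (β + 1)) / ((1 + x / 4) ^ (L * L) * Zfun L q (β + 1)) := by
        exact div_le_div₀ (by positivity) hnum (by positivity) hZratio
    _ = Real.exp B / (1 + x / 4) ^ (L * L) := by
        rw [mul_div_mul_right _ _ hZ1.ne']
    _ ≤ Real.exp B / Real.exp ((L : ℝ) ^ 2 * x / 8) := by
        exact div_le_div_of_nonneg_left (Real.exp_pos _).le (Real.exp_pos _) hfac
    _ = Real.exp (B - (L : ℝ) ^ 2 * x / 8) := by rw [← Real.exp_sub]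

/-- Theorem 3.3(2) (hexagonal lattice): if `e^{β_L} ≪ L^{2/3}`, `α ∈ (0,1)` and
`e^{β_L} ≪ L^{(2/3)(1-α)}`, then for every `c > 0` the Gibbs measure of
`X_{[0, cL^{2α}]}` tends to `0`. -/
theorem gibbs_energy_window_null (q : ℕ) (hq : 2 ≤ q) (β : ℕ → ℝ)
    (hβ : Filter.Tendsto β Filter.atTop Filter.atTop)
    (hcond : Filter.Tendsto (fun L : ℕ => Real.exp (β L) / (L : ℝ) ^ ((2 : ℝ) / 3))
      Filter.atTop (nhds 0))
    (α : ℝ) (hα0 : 0 < α) (hα1 : α < 1)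
    (hcond2 : Filter.Tendsto
      (fun L : ℕ => Real.exp (β L) / (L : ℝ) ^ (((2 : ℝ) / 3) * (1 - α)))
      Filter.atTop (nhds 0)) :
    ∀ c : ℝ, 0 < c →
      Filter.Tendsto (fun L : ℕ => gibbsP L q (β L)
          {σ : Conf L q | (Ham L q σ : ℝ) ≤ c * (L : ℝ) ^ (2 * α)})
        Filter.atTop (nhds 0) := by
  intro c hc
  classical
  -- eventually β L ≥ 0
  have hβ0 : ∀ᶠ L : ℕ in Filter.atTop, 0 ≤ β L := hβ.eventually_ge_atTop 0
  have hL2 : ∀ᶠ L : ℕ in Filter.atTop, 2 ≤ L := Filter.eventually_ge_atTop 2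
  -- the dominating function
  set g : ℕ → ℝ := fun L => Real.exp (c * (L : ℝ) ^ (2 * α)
      - (L : ℝ) ^ 2 * Real.exp (-(3 * β L)) / 8) with hg
  -- lower bound
  have hlow : ∀ᶠ L : ℕ in Filter.atTop,
      0 ≤ gibbsP L q (β L) {σ : Conf L q | (Ham L q σ : ℝ) ≤ c * (L : ℝ) ^ (2 * α)} := by
    filter_upwards [hL2] with L hL
    haveI : NeZero L := ⟨by omega⟩
    rw [gibbsP]
    apply div_nonneg
    · rw [tsum_fintype]
      exact Finset.sum_nonneg fun σ _ => Set.indicator_nonneg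
        (fun ζ _ => (Real.exp_pos _).le) _
    · exact (zfun_pos L q hq _).le
  -- upper bound
  have hup : ∀ᶠ L : ℕ in Filter.atTop,
      gibbsP L q (β L) {σ : Conf L q | (Ham L q σ : ℝ) ≤ c * (L : ℝ) ^ (2 * α)} ≤ g L := by
    filter_upwards [hL2, hβ0] with L hL hb
    exact main_bound L q hL hq (β L) (c * (L : ℝ) ^ (2 * α)) hb
  -- g tends to 0
  have hgto : Filter.Tendsto g Filter.atTop (nhds 0) := by
    rw [hg]
    apply Real.tendsto_exp_atBot.comp
    -- the exponent tends to -infinity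
    have hr3 : Filter.Tendsto
        (fun L : ℕ => (Real.exp (β L) / (L : ℝ) ^ (((2 : ℝ) / 3) * (1 - α))) ^ (3:ℕ))
        Filter.atTop (nhds 0) := by
      have := hcond2.pow 3
      simpa using this
    have hsmall : ∀ᶠ L : ℕ in Filter.atTop,
        (Real.exp (β L) / (L : ℝ) ^ (((2 : ℝ) / 3) * (1 - α))) ^ (3:ℕ)
          < 1 / (8 * (c + 1)) := by
      have hpos : (0:ℝ) < 1 / (8 * (c + 1)) := by positivity
      exact hr3.eventually_lt_const hpos
    have hcne : (8 * (c + 1) : ℝ) ≠ 0 := by positivity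
    -- key eventual bound on the exponent
    have hbd : ∀ᶠ L : ℕ in Filter.atTop,
        c * (L : ℝ) ^ (2 * α) - (L : ℝ) ^ 2 * Real.exp (-(3 * β L)) / 8
          ≤ -(L : ℝ) ^ (2 * α) := by
      filter_upwards [hL2, hsmall] with L hL hs
      have hL0 : (0:ℝ) < (L : ℝ) := by
        have : 0 < L := by omega
        exact_mod_cast this
      set r : ℝ := Real.exp (β L) / (L : ℝ) ^ (((2 : ℝ) / 3) * (1 - α)) with hrdef
      have hrpos : 0 < r :=
        div_pos (Real.exp_pos _) (Real.rpow_pos_of_pos hL0 _)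
      have hr3pos : 0 < r ^ (3:ℕ) := pow_pos hrpos 3
      have h1 : r ^ (3:ℕ) = Real.exp (3 * β L) / (L : ℝ) ^ ((2:ℝ) - 2 * α) := by
        rw [hrdef, div_pow]
        congr 1
        · rw [← Real.exp_nat_mul]; norm_num
        · rw [← Real.rpow_natCast ((L:ℝ) ^ (((2:ℝ)/3) * (1 - α))) 3,
            ← Real.rpow_mul hL0.le]
          congr 1
          push_cast
          ring
      have hid : (L : ℝ) ^ 2 * Real.exp (-(3 * β L)) * r ^ (3:ℕ)
          = (L : ℝ) ^ (2 * α) := by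
        rw [h1]
        have h2 : (L : ℝ) ^ 2 * Real.exp (-(3 * β L)) *
            (Real.exp (3 * β L) / (L : ℝ) ^ ((2:ℝ) - 2 * α))
            = (L : ℝ) ^ 2 * (Real.exp (-(3 * β L)) * Real.exp (3 * β L)) /
              (L : ℝ) ^ ((2:ℝ) - 2 * α) := by ring
        rw [h2, ← Real.exp_add, neg_add_cancel, Real.exp_zero, mul_one]
        rw [← Real.rpow_natCast (L:ℝ) 2, ← Real.rpow_sub hL0]
        congr 1
        push_cast
        ring
      have hX : (0:ℝ) ≤ (L : ℝ) ^ 2 * Real.exp (-(3 * β L)) := by positivity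
      have hs1 : r ^ (3:ℕ) * (8 * (c + 1)) ≤ 1 := by
        have h3 := mul_le_mul_of_nonneg_right hs.le
          (by positivity : (0:ℝ) ≤ 8 * (c + 1))
        rwa [one_div, inv_mul_cancel₀ hcne] at h3
      have h4 := mul_le_mul_of_nonneg_left hs1 hX
      have h8 : 8 * (c + 1) * (L : ℝ) ^ (2 * α)
          ≤ (L : ℝ) ^ 2 * Real.exp (-(3 * β L)) := by
        calc 8 * (c + 1) * (L : ℝ) ^ (2 * α)
            = ((L : ℝ) ^ 2 * Real.exp (-(3 * β L))) * (r ^ (3:ℕ) * (8 * (c + 1))) := by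
              rw [← hid]; ring
          _ ≤ ((L : ℝ) ^ 2 * Real.exp (-(3 * β L))) * 1 := h4
          _ = (L : ℝ) ^ 2 * Real.exp (-(3 * β L)) := mul_one _
      have hLα : (0:ℝ) < (L : ℝ) ^ (2 * α) := Real.rpow_pos_of_pos hL0 _
      nlinarith [h8, hLα]
    -- -(L)^(2α) tends to -infinity
    have hneg : Filter.Tendsto (fun L : ℕ => -(L : ℝ) ^ (2 * α))
        Filter.atTop Filter.atBot := by
      apply Filter.Tendsto.comp Filter.tendsto_neg_atTop_atBot
      exact (tendsto_rpow_atTop (by positivity)).comp tendsto_natCast_atTop_atTop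
    exact Filter.tendsto_atBot_mono' _ hbd hneg
  exact squeeze_zero' hlow hup hgto

end IsingHex
end

section
/- Let G = (V, E) be a finite graph such that every connected component of G has at least three edges. Then E can be partitioned as E = E₁ ∪ ⋯ ∪ E_n into pairwise disjoint edge sets such that each E_i is connected (its induced subgraph is connected) and |E_i| ∈ {3, 4, 5, 6} for all i = 1, …, n. -/
/-!
Root a spanning tree of a connected edge set `s` and call the branch of a vertex the set of
edges of `s` with an endpoint in its subtree; removing a branch leaves `s` connected. If `s` has
at least five edges, take a deepest vertex `v` whose branch has at least three edges, so that
the branches of its children have at most two. Either the branch of `v` has exactly three edges,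
or the branches of the children together with the other edges at `v` (except the one towards the
root) have at least three edges, and a minimal union of these pieces with at least three edges
has three or four. Such a union is connected through `v`, and removing it keeps `s` connected.
Splitting off such pieces while more than six edges remain decomposes every component.
-/

/-- For a graph `G = (V, E)` and edges `E₀ ⊆ E`, `E₀` is connected if the subgraph
`G[E₀]` induced by the edge set `E₀` (on the endpoints of its edges) is connected. -/
def EdgeSetConnected {V : Type*} (s : Set (Sym2 V)) : Prop :=
  ∀ v w : V, (∃ e ∈ s, v ∈ e) → (∃ e ∈ s, w ∈ e) →
    (SimpleGraph.fromEdgeSet s).Reachable v w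

open SimpleGraph

section

variable {V : Type*}

theorem exists_subset_ncard_sUnion_mem_Ico {α : Type*} [Finite α] {F : Set (Set α)} {m k : ℕ}
    (hF : ∀ p ∈ F, p.ncard ≤ k) (hm : 0 < m) (hmF : m ≤ (⋃₀ F).ncard) :
    ∃ F' ⊆ F, (⋃₀ F').ncard ∈ Set.Ico m (m + k) := by
  obtain ⟨F', hF'F, hmin, hmin'⟩ :=
    exists_minimal_le_of_wellFoundedLT (fun F' : Set (Set α) => m ≤ (⋃₀ F').ncard) F hmF
  refine ⟨F', hF'F, hmin, ?_⟩
  obtain ⟨p, hp⟩ : F'.Nonempty := Set.nonempty_iff_ne_empty.mpr fun h => by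
    simp only [h, Set.sUnion_empty, Set.ncard_empty] at hmin; omega
  have hsmall : (⋃₀ (F' \ {p})).ncard < m := by
    by_contra! h
    exact (hmin' h Set.sdiff_subset hp).2 rfl
  calc (⋃₀ F').ncard = (p ∪ ⋃₀ (F' \ {p})).ncard := by
        rw [← Set.sUnion_insert, Set.insert_sdiff_singleton, Set.insert_eq_of_mem hp]
    _ ≤ p.ncard + (⋃₀ (F' \ {p})).ncard := Set.ncard_union_le _ _
    _ < m + k := by have := hF p (hF'F hp); omega

namespace SimpleGraph

theorem reachable_fromEdgeSet_of_mem {t : Set (Sym2 V)} {e : Sym2 V} (he : e ∈ t) {a b : V}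
    (ha : a ∈ e) (hb : b ∈ e) : (fromEdgeSet t).Reachable a b := by
  rw [reachable_fromEdgeSet_eq_reflTransGen_toRel]
  induction e using Sym2.ind with | _ x y => ?_
  rcases Sym2.mem_iff.mp ha with rfl | rfl <;> rcases Sym2.mem_iff.mp hb with rfl | rfl
  exacts [.refl, .single he, .single (show s(_, _) ∈ t from Sym2.eq_swap ▸ he), .refl]

theorem reachable_of_mem_edgeSet {G : SimpleGraph V} {e : Sym2 V} (he : e ∈ G.edgeSet) {a b : V}
    (ha : a ∈ e) (hb : b ∈ e) : G.Reachable a b :=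
  G.fromEdgeSet_edgeSet ▸ reachable_fromEdgeSet_of_mem he ha hb

end SimpleGraph

theorem EdgeSetConnected.of_forall_reachable {s : Set (Sym2 V)} (r : V)
    (h : ∀ v, (∃ e ∈ s, v ∈ e) → (fromEdgeSet s).Reachable v r) : EdgeSetConnected s :=
  fun v w hv hw => (h v hv).trans (h w hw).symm

theorem edgeSetConnected_singleton (e : Sym2 V) : EdgeSetConnected ({e} : Set (Sym2 V)) := by
  rintro v w ⟨_, rfl, hv⟩ ⟨_, rfl, hw⟩
  exact reachable_fromEdgeSet_of_mem (Set.mem_singleton _) hv hw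

theorem EdgeSetConnected.sUnion {F : Set (Set (Sym2 V))} {v : V}
    (hF : ∀ p ∈ F, EdgeSetConnected p ∧ ∃ e ∈ p, v ∈ e) : EdgeSetConnected (⋃₀ F) :=
  .of_forall_reachable v fun a ⟨e, ⟨p, hp, hep⟩, ha⟩ =>
    ((hF p hp).1 a v ⟨e, hep, ha⟩ (hF p hp).2).mono (fromEdgeSet_mono (Set.subset_sUnion_of_mem hp))

/-- Parent pointers of a spanning tree of `fromEdgeSet s` rooted at `r`, with a depth that
decreases towards the root; the root and the vertices outside `s` are their own parents. -/
structure RootedSpanningTree (s : Set (Sym2 V)) (r : V) where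
  parent : V → V
  depth : V → ℕ
  parent_ne : ∀ ⦃x⦄, (∃ e ∈ s, x ∈ e) → x ≠ r → parent x ≠ x
  mem_of_parent_ne : ∀ ⦃x⦄, parent x ≠ x → s(x, parent x) ∈ s
  depth_lt : ∀ ⦃x⦄, parent x ≠ x → depth (parent x) < depth x

theorem EdgeSetConnected.nonempty_rootedSpanningTree {s : Set (Sym2 V)} (hs : EdgeSetConnected s)
    {r : V} (hr : ∃ e ∈ s, r ∈ e) : Nonempty (RootedSpanningTree s r) := by
  classical
  set d := fun x => (fromEdgeSet s).dist x r
  have exists_parent : ∀ x, (∃ e ∈ s, x ∈ e) ∧ x ≠ r → ∃ y, (fromEdgeSet s).Adj x y ∧ d y < d x := by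
    rintro x ⟨hx, hxr⟩
    obtain ⟨p, hp⟩ := (hs x r hx hr).exists_walk_length_eq_dist
    have hnil : ¬p.Nil := Walk.not_nil_of_ne hxr
    have := dist_le p.tail
    have := p.length_tail_add_one hnil
    exact ⟨p.snd, p.adj_snd hnil, by simp only [d]; omega⟩
  choose! f hf using exists_parent
  let parent x := if (∃ e ∈ s, x ∈ e) ∧ x ≠ r then f x else x
  have hparent : ∀ x, parent x ≠ x → (fromEdgeSet s).Adj x (parent x) ∧ d (parent x) < d x := by
    intro x hx
    by_cases h : (∃ e ∈ s, x ∈ e) ∧ x ≠ r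
    · simpa only [parent, if_pos h] using hf x h
    · simp only [parent, if_neg h, ne_eq, not_true_eq_false] at hx
  refine ⟨parent, d, fun x hx hxr => ?_, fun x hx => ((fromEdgeSet_adj s).mp (hparent x hx).1).1,
    fun x hx => (hparent x hx).2⟩
  simpa only [parent, if_pos (And.intro hx hxr)] using (hf x ⟨hx, hxr⟩).1.ne.symm

namespace RootedSpanningTree

variable {s : Set (Sym2 V)} {r : V} (T : RootedSpanningTree s r)

def subtree (u : V) : Set V := {z | Relation.ReflTransGen (fun a b => T.parent a = b) z u}

def branch (u : V) : Set (Sym2 V) := {e ∈ s | ∃ z ∈ e, z ∈ T.subtree u}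

def children (v : V) : Set V := {u | T.parent u = v ∧ u ≠ v}

theorem mem_subtree_self (u : V) : u ∈ T.subtree u := Relation.ReflTransGen.refl

theorem mem_subtree_of_parent_mem {u z : V} (h : T.parent z ∈ T.subtree u) : z ∈ T.subtree u :=
  Relation.ReflTransGen.head rfl h

theorem mem_subtree_root {z : V} (hz : ∃ e ∈ s, z ∈ e) : z ∈ T.subtree r := by
  induction hn : T.depth z using Nat.strong_induction_on generalizing z with | _ n ih => ?_
  by_cases hzr : z = r
  · exact hzr ▸ T.mem_subtree_self r
  have hpz := T.parent_ne hz hzr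
  exact T.mem_subtree_of_parent_mem <| ih _ (hn ▸ T.depth_lt hpz)
    ⟨_, T.mem_of_parent_ne hpz, Sym2.mem_mk_right _ _⟩ rfl

theorem branch_root : T.branch r = s :=
  Set.Subset.antisymm (fun _ he => he.1) fun e he =>
    ⟨he, e.out.1, e.out_fst_mem, T.mem_subtree_root ⟨e, he, e.out_fst_mem⟩⟩

theorem exists_child_of_mem_subtree {v z : V} (hz : z ∈ T.subtree v) (hzv : z ≠ v) :
    ∃ u ∈ T.children v, z ∈ T.subtree u := by
  induction hz with
  | refl => exact absurd rfl hzv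
  | @tail b c hzb hbc ih =>
    by_cases hb : b = c
    · subst hb
      exact ih hzv
    · exact ⟨b, ⟨hbc, hb⟩, hzb⟩

theorem reachable_of_mem_subtree {t : Set (Sym2 V)} {u z : V} (hz : z ∈ T.subtree u)
    (ht : ∀ x, z ∈ T.subtree x → x ∈ T.subtree u → T.parent x ≠ x → s(x, T.parent x) ∈ t) :
    (fromEdgeSet t).Reachable z u := by
  induction hz using Relation.ReflTransGen.head_induction_on with
  | refl => exact .refl u
  | @head a c hac hcu ih =>
    subst hac
    refine Reachable.trans ?_ (ih fun x hx => ht x (T.mem_subtree_of_parent_mem hx))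
    by_cases ha : T.parent a = a
    · rw [ha]
    · exact reachable_fromEdgeSet_of_mem (ht a (T.mem_subtree_self a)
        (T.mem_subtree_of_parent_mem hcu) ha) (Sym2.mem_mk_left _ _) (Sym2.mem_mk_right _ _)

theorem edgeSetConnected_branch (u : V) : EdgeSetConnected (T.branch u) :=
  .of_forall_reachable u fun _ ⟨_, he, hae⟩ => by
    have ⟨_, z, hze, hz⟩ := he
    exact (reachable_fromEdgeSet_of_mem he hae hze).trans <|
      T.reachable_of_mem_subtree hz fun x _ hxu hx =>
        ⟨T.mem_of_parent_ne hx, x, Sym2.mem_mk_left _ _, hxu⟩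

theorem edgeSetConnected_sdiff {U : Set V} {t : Set (Sym2 V)}
    (hU : ∀ x, T.parent x ∈ U → x ∈ U)
    (hUt : ∀ e ∈ s, (∃ z ∈ e, z ∈ U) → e ∈ t)
    (htU : ∀ x, T.parent x ≠ x → s(x, T.parent x) ∈ t → x ∈ U) :
    EdgeSetConnected (s \ t) := by
  have hdesc : ∀ {x z}, z ∈ T.subtree x → x ∈ U → z ∈ U := fun hz hx => by
    induction hz using Relation.ReflTransGen.head_induction_on with
    | refl => exact hx
    | head hac _ ih => exact hU _ (hac ▸ ih)
  refine .of_forall_reachable r fun c ⟨f, ⟨hfs, hft⟩, hcf⟩ => ?_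
  have hcU : c ∉ U := fun hc => hft (hUt f hfs ⟨c, hcf, hc⟩)
  exact T.reachable_of_mem_subtree (T.mem_subtree_root ⟨f, hfs, hcf⟩) fun x hcx _ hx =>
    Set.mem_sdiff_of_mem (T.mem_of_parent_ne hx) fun ht => hcU (hdesc hcx (htU x hx ht))

theorem edgeSetConnected_sdiff_branch (v : V) : EdgeSetConnected (s \ T.branch v) :=
  T.edgeSetConnected_sdiff (U := T.subtree v) (fun _ => T.mem_subtree_of_parent_mem)
    (fun _ he hz => ⟨he, hz⟩) fun x _ ⟨_, z, hz, hzv⟩ => by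
      rcases Sym2.mem_iff.mp hz with rfl | rfl
      exacts [hzv, T.mem_subtree_of_parent_mem hzv]

/-- The edge from `v` to its parent is left out, so that removing any union of pieces keeps the
rest attached to the root. -/
def pieces (v : V) : Set (Set (Sym2 V)) :=
  T.branch '' T.children v ∪
    (fun e => {e}) '' ((T.branch v \ {s(v, T.parent v)}) \ ⋃ u ∈ T.children v, T.branch u)

theorem parent_ne_self_of_mem_children {u v : V} (hu : u ∈ T.children v) : T.parent u ≠ u :=
  fun h => hu.2 (h ▸ hu.1)

theorem mem_of_mem_branch_of_forall_not_mem {v : V} {e : Sym2 V} (he : e ∈ T.branch v)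
    (hchild : ∀ u ∈ T.children v, e ∉ T.branch u) : v ∈ e := by
  obtain ⟨hes, z, hze, hz⟩ := he
  by_contra hve
  obtain ⟨u, hu, hzu⟩ := T.exists_child_of_mem_subtree hz fun h => hve (h ▸ hze)
  exact hchild u hu ⟨hes, z, hze, hzu⟩

theorem branch_sdiff_subset_sUnion_pieces (v : V) :
    T.branch v \ {s(v, T.parent v)} ⊆ ⋃₀ T.pieces v := by
  intro e he
  by_cases h : e ∈ ⋃ u ∈ T.children v, T.branch u
  · obtain ⟨u, hu, heu⟩ := Set.mem_iUnion₂.mp h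
    exact ⟨_, Or.inl ⟨u, hu, rfl⟩, heu⟩
  · exact ⟨{e}, Or.inr ⟨e, ⟨he, h⟩, rfl⟩, rfl⟩

theorem sUnion_pieces_subset (v : V) : ⋃₀ T.pieces v ⊆ s := by
  rintro e ⟨p, ⟨u, -, rfl⟩ | ⟨f, hf, rfl⟩, hep⟩
  exacts [hep.1, hep ▸ hf.1.1.1]

theorem connected_of_mem_pieces {v : V} {p : Set (Sym2 V)} (hp : p ∈ T.pieces v) :
    EdgeSetConnected p ∧ ∃ e ∈ p, v ∈ e := by
  rcases hp with ⟨u, hu, rfl⟩ | ⟨e, ⟨he, hnot⟩, rfl⟩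
  · refine ⟨T.edgeSetConnected_branch u, _,
      ⟨T.mem_of_parent_ne (T.parent_ne_self_of_mem_children hu), u, Sym2.mem_mk_left _ _,
        T.mem_subtree_self u⟩, hu.1 ▸ Sym2.mem_mk_right _ _⟩
  · refine ⟨edgeSetConnected_singleton e, e, rfl, ?_⟩
    exact T.mem_of_mem_branch_of_forall_not_mem he.1 fun u hu heu =>
      hnot (Set.mem_iUnion₂.mpr ⟨u, hu, heu⟩)

theorem edgeSetConnected_sdiff_sUnion {v : V} {F : Set (Set (Sym2 V))} (hF : F ⊆ T.pieces v) :
    EdgeSetConnected (s \ ⋃₀ F) := by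
  refine T.edgeSetConnected_sdiff (U := {z | ∃ u ∈ T.children v, T.branch u ∈ F ∧ z ∈ T.subtree u})
    (fun x ⟨u, hu, huF, hx⟩ => ⟨u, hu, huF, T.mem_subtree_of_parent_mem hx⟩)
    (fun e he ⟨z, hze, u, hu, huF, hzu⟩ => ⟨_, huF, he, z, hze, hzu⟩) ?_
  rintro x hx ⟨p, hpF, hxp⟩
  rcases hF hpF with ⟨u, hu, rfl⟩ | ⟨e, ⟨⟨he, hne⟩, hnot⟩, rfl⟩
  · obtain ⟨_, z, hz, hzu⟩ := hxp
    rcases Sym2.mem_iff.mp hz with rfl | rfl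
    exacts [⟨u, hu, hpF, hzu⟩, ⟨u, hu, hpF, T.mem_subtree_of_parent_mem hzu⟩]
  · obtain rfl : s(x, T.parent x) = e := hxp
    have hx' : x ∈ T.children (T.parent x) := ⟨rfl, fun h => hx h.symm⟩
    rcases Sym2.mem_iff.mp (T.mem_of_mem_branch_of_forall_not_mem he fun u hu heu =>
      hnot (Set.mem_iUnion₂.mpr ⟨u, hu, heu⟩)) with rfl | rfl
    · exact (hne rfl).elim
    · exact (hnot (Set.mem_iUnion₂.mpr ⟨x, hx', he.1, x, Sym2.mem_mk_left _ _,
        T.mem_subtree_self x⟩)).elim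

theorem exists_subset_connected_sdiff_of_children [Finite V] {v : V}
    (hv : 4 ≤ (T.branch v).ncard) (hchild : ∀ u ∈ T.children v, (T.branch u).ncard ≤ 2) :
    ∃ t ⊆ s, t.ncard ∈ Set.Ico 3 5 ∧ EdgeSetConnected t ∧ EdgeSetConnected (s \ t) := by
  have hcard : 3 ≤ (⋃₀ T.pieces v).ncard := calc
    3 ≤ (T.branch v \ {s(v, T.parent v)}).ncard := by
      have := Set.pred_ncard_le_ncard_sdiff_singleton (T.branch v) s(v, T.parent v)
      omega
    _ ≤ _ := Set.ncard_le_ncard (T.branch_sdiff_subset_sUnion_pieces v)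
  have hsmall : ∀ p ∈ T.pieces v, p.ncard ≤ 2 := by
    rintro p (⟨u, hu, rfl⟩ | ⟨e, -, rfl⟩)
    exacts [hchild u hu, by simp]
  obtain ⟨F, hF, hFcard⟩ := exists_subset_ncard_sUnion_mem_Ico hsmall (by norm_num) hcard
  exact ⟨⋃₀ F, (Set.sUnion_mono hF).trans (T.sUnion_pieces_subset v), hFcard,
    .sUnion fun p hp => T.connected_of_mem_pieces (hF hp), T.edgeSetConnected_sdiff_sUnion hF⟩

end RootedSpanningTree

theorem EdgeSetConnected.exists_subset_connected_sdiff [Finite V] {s : Set (Sym2 V)}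
    (hs : EdgeSetConnected s) (h5 : 5 ≤ s.ncard) :
    ∃ t ⊆ s, t.ncard ∈ Set.Ico 3 5 ∧ EdgeSetConnected t ∧ EdgeSetConnected (s \ t) := by
  obtain ⟨e, he⟩ := Set.nonempty_of_ncard_ne_zero (by omega : s.ncard ≠ 0)
  obtain ⟨T⟩ := hs.nonempty_rootedSpanningTree ⟨e, he, e.out_fst_mem⟩
  obtain ⟨v, hv, hdeepest⟩ := Set.exists_max_image {u | 3 ≤ (T.branch u).ncard} T.depth
    (Set.toFinite _) ⟨e.out.1, show 3 ≤ (T.branch _).ncard by rw [T.branch_root]; omega⟩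
  have hchild : ∀ u ∈ T.children v, (T.branch u).ncard ≤ 2 := fun u hu => by
    by_contra! h
    have := T.depth_lt (T.parent_ne_self_of_mem_children hu)
    have := hdeepest u h
    rw [hu.1] at *
    omega
  obtain h3 | h4 : (T.branch v).ncard = 3 ∨ 4 ≤ (T.branch v).ncard := by
    have : 3 ≤ (T.branch v).ncard := hv
    omega
  · exact ⟨T.branch v, fun _ h => h.1, by simp [h3], T.edgeSetConnected_branch v,
      T.edgeSetConnected_sdiff_branch v⟩
  · exact T.exists_subset_connected_sdiff_of_children h4 hchild

def IsEdgeDecomposition (s : Set (Sym2 V)) (P : Set (Set (Sym2 V))) : Prop :=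
  P.PairwiseDisjoint id ∧ ⋃₀ P = s ∧ ∀ p ∈ P, EdgeSetConnected p ∧ p.ncard ∈ Set.Icc 3 6

theorem EdgeSetConnected.exists_isEdgeDecomposition [Finite V] {s : Set (Sym2 V)}
    (hs : EdgeSetConnected s) (h3 : 3 ≤ s.ncard) : ∃ P, IsEdgeDecomposition s P := by
  induction hn : s.ncard using Nat.strong_induction_on generalizing s with | _ n ih => ?_
  by_cases h6 : n ≤ 6
  · exact ⟨{s}, Set.pairwiseDisjoint_singleton _ _, Set.sUnion_singleton s,
      by simpa using ⟨hs, by omega, by omega⟩⟩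
  obtain ⟨t, hts, ⟨ht3, ht5⟩, htc, hrest⟩ := hs.exists_subset_connected_sdiff (by omega)
  have hcard : (s \ t).ncard = n - t.ncard := by rw [Set.ncard_sdiff hts, hn]
  obtain ⟨P, hPd, hPu, hP⟩ := ih _ (by omega) hrest (by omega) rfl
  refine ⟨insert t P, hPd.insert fun q hq _ => ?_, ?_, ?_⟩
  · exact Set.disjoint_sdiff_right.mono_right (hPu ▸ Set.subset_sUnion_of_mem hq)
  · rw [Set.sUnion_insert, hPu, Set.union_sdiff_cancel hts]
  · exact Set.forall_mem_insert.mpr ⟨⟨htc, ht3, by omega⟩, hP⟩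

theorem IsEdgeDecomposition.iUnion {ι : Type*} {s : ι → Set (Sym2 V)}
    {P : ι → Set (Set (Sym2 V))} (hs : Pairwise fun i j => Disjoint (s i) (s j))
    (hP : ∀ i, IsEdgeDecomposition (s i) (P i)) : IsEdgeDecomposition (⋃ i, s i) (⋃ i, P i) := by
  refine ⟨?_, by rw [Set.sUnion_iUnion]; exact Set.iUnion_congr fun i => (hP i).2.1, ?_⟩
  · simp only [Set.PairwiseDisjoint, Set.Pairwise, Set.mem_iUnion]
    rintro p ⟨i, hp⟩ q ⟨j, hq⟩ hpq
    obtain rfl | hij := eq_or_ne i j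
    · exact (hP i).1 hp hq hpq
    · exact (hs hij).mono ((hP i).2.1 ▸ Set.subset_sUnion_of_mem hp)
        ((hP j).2.1 ▸ Set.subset_sUnion_of_mem hq)
  · simp only [Set.mem_iUnion]
    rintro p ⟨i, hp⟩
    exact (hP i).2.2 p hp

namespace SimpleGraph.ConnectedComponent

variable {G : SimpleGraph V}

def edges (C : G.ConnectedComponent) : Set (Sym2 V) :=
  {e ∈ G.edgeSet | ∃ w ∈ e, G.connectedComponentMk w = C}

theorem edges_connectedComponentMk (v : V) :
    (G.connectedComponentMk v).edges = {e ∈ G.edgeSet | ∃ w, w ∈ e ∧ G.Reachable v w} := by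
  simp only [edges, ConnectedComponent.eq, reachable_comm (u := v)]

theorem edgeSetConnected_edges (C : G.ConnectedComponent) : EdgeSetConnected C.edges := by
  induction C using ConnectedComponent.ind with | _ v => ?_
  have hreach : ∀ a, G.Reachable v a →
      (fromEdgeSet (G.connectedComponentMk v).edges).Reachable a v := by
    intro a h
    rw [reachable_iff_reflTransGen] at h
    induction h with
    | refl => rfl
    | @tail b c hvb hbc ih =>
      refine .trans ?_ ih
      have hbv : G.connectedComponentMk b = G.connectedComponentMk v :=
        ConnectedComponent.eq.mpr ((reachable_iff_reflTransGen _ _).mpr hvb).symm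
      have hbc' : s(b, c) ∈ (G.connectedComponentMk v).edges := ⟨hbc, b, Sym2.mem_mk_left _ _, hbv⟩
      exact reachable_fromEdgeSet_of_mem hbc' (Sym2.mem_mk_right _ _) (Sym2.mem_mk_left _ _)
  refine .of_forall_reachable v fun a ⟨e, ⟨he, w, hwe, hw⟩, hae⟩ => hreach a ?_
  exact (ConnectedComponent.eq.mp hw).symm.trans (reachable_of_mem_edgeSet he hwe hae)

theorem pairwise_disjoint_edges :
    Pairwise fun C D : G.ConnectedComponent => Disjoint C.edges D.edges := by
  intro C D hCD
  refine Set.disjoint_left.mpr fun e ⟨he, w, hwe, hw⟩ ⟨_, w', hwe', hw'⟩ => hCD ?_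
  rw [← hw, ← hw']
  exact ConnectedComponent.eq.mpr (reachable_of_mem_edgeSet he hwe hwe')

theorem iUnion_edges : ⋃ C : G.ConnectedComponent, C.edges = G.edgeSet :=
  Set.Subset.antisymm (Set.iUnion_subset fun _ _ he => he.1) fun e he =>
    Set.mem_iUnion.mpr ⟨_, he, e.out.1, e.out_fst_mem, rfl⟩

end SimpleGraph.ConnectedComponent

end

/-- Lemma 4.1: if every connected component of a finite graph `G` has at least three
edges, then the edge set of `G` can be partitioned into pairwise disjoint connected
edge sets of cardinality `3`, `4`, `5` or `6`. -/
theorem edge_decomposition {V : Type*} [Fintype V] (G : SimpleGraph V)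
    (hcomp : ∀ v : V, 3 ≤ {e ∈ G.edgeSet | ∃ w, w ∈ e ∧ G.Reachable v w}.ncard) :
    ∃ (n : ℕ) (E : Fin n → Set (Sym2 V)),
      (⋃ i, E i) = G.edgeSet ∧
      (∀ i j, i ≠ j → Disjoint (E i) (E j)) ∧
      (∀ i, EdgeSetConnected (E i) ∧ (E i).ncard ∈ ({3, 4, 5, 6} : Set ℕ)) := by
  have hC : ∀ C : G.ConnectedComponent, ∃ P, IsEdgeDecomposition C.edges P := by
    refine ConnectedComponent.ind fun v => ?_
    refine (ConnectedComponent.edgeSetConnected_edges _).exists_isEdgeDecomposition ?_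
    rw [ConnectedComponent.edges_connectedComponentMk]
    exact hcomp v
  choose P hP using hC
  obtain ⟨hPd, hPu, hP⟩ := IsEdgeDecomposition.iUnion ConnectedComponent.pairwise_disjoint_edges hP
  rw [ConnectedComponent.iUnion_edges] at hPu
  set Q := ⋃ C, P C
  let e := Finite.equivFin Q
  refine ⟨_, fun i => e.symm i, ?_, fun i j hij => ?_, fun i => ?_⟩
  · rw [← hPu, Set.sUnion_eq_iUnion]
    exact e.symm.surjective.iUnion_comp (fun p : Q => (p : Set (Sym2 V)))
  · exact hPd (e.symm i).2 (e.symm j).2 (Subtype.coe_injective.ne (e.symm.injective.ne hij))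
  · obtain ⟨hconn, hcard⟩ := hP _ (e.symm i).2
    refine ⟨hconn, ?_⟩
    simp only [Set.mem_Icc, Set.mem_insert_iff, Set.mem_singleton_iff] at hcard ⊢
    omega
end

section
/- On the hexagonal lattice: for all L ≥ 8 and all integers j with 1 ≤ j < ⌊L²/2⌋, the number of configurations of energy 3j satisfies |X_{3j}| ≥ 4^j · binom(⌊L²/2⌋, j). -/
open scoped Classical BigOperators

namespace IsingHex

section CountLower

open Finset

variable {L q : ℕ}

lemma hexAdj_symm {L : ℕ} {v w : Site L} (h : hexAdj v w) : hexAdj w v := by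
  rcases h with ⟨h1, h2, h3⟩ | ⟨h1, h2, h3⟩
  · exact Or.inr ⟨h2, h1, h3⟩
  · exact Or.inl ⟨h2, h1, h3⟩

lemma hexAdj_irrefl {L : ℕ} (v : Site L) : ¬ hexAdj v v := by
  rintro (⟨h1, h2, -⟩ | ⟨h1, h2, -⟩) <;> rw [h1] at h2 <;> exact Bool.noConfusion h2

/-- The three neighbours of a site. -/
def hexNbrs (L : ℕ) (v : Site L) : Finset (Site L) :=
  if v.2 = false then
    {((v.1.1, v.1.2), true), ((v.1.1 - 1, v.1.2), true), ((v.1.1, v.1.2 - 1), true)}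
  else
    {((v.1.1, v.1.2), false), ((v.1.1 + 1, v.1.2), false), ((v.1.1, v.1.2 + 1), false)}

lemma mem_hexNbrs {L : ℕ} (v w : Site L) : w ∈ hexNbrs L v ↔ hexAdj v w := by
  obtain ⟨⟨v1, v2⟩, vb⟩ := v
  obtain ⟨⟨w1, w2⟩, wb⟩ := w
  cases vb
  · -- v is an up-triangle
    have hset : hexNbrs L ((v1, v2), false)
        = {((v1, v2), true), ((v1 - 1, v2), true), ((v1, v2 - 1), true)} := rfl
    rw [hset, Finset.mem_insert, Finset.mem_insert, Finset.mem_singleton]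
    constructor
    · rintro (h | h | h) <;>
        (injection h with ha hb; injection ha with h1 h2; subst h1; subst h2; subst hb)
      · exact Or.inl ⟨rfl, rfl, Or.inl rfl⟩
      · exact Or.inl ⟨rfl, rfl, Or.inr (Or.inl rfl)⟩
      · exact Or.inl ⟨rfl, rfl, Or.inr (Or.inr rfl)⟩
    · rintro (⟨-, hb, h⟩ | ⟨hfalse, -, -⟩)
      · have hb' : wb = true := hb
        subst hb'
        rcases h with h | h | h
        · have h' : (w1, w2) = (v1, v2) := h
          refine Or.inl ?_
          injection h' with a b
          subst a; subst b; rfl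
        · have h' : (w1, w2) = (v1 - 1, v2) := h
          refine Or.inr (Or.inl ?_)
          injection h' with a b
          subst a; subst b; rfl
        · have h' : (w1, w2) = (v1, v2 - 1) := h
          refine Or.inr (Or.inr ?_)
          injection h' with a b
          subst a; subst b; rfl
      · exact absurd hfalse (by simp)
  · -- v is a down-triangle
    have hset : hexNbrs L ((v1, v2), true)
        = {((v1, v2), false), ((v1 + 1, v2), false), ((v1, v2 + 1), false)} := rfl
    rw [hset, Finset.mem_insert, Finset.mem_insert, Finset.mem_singleton]
    constructor
    · rintro (h | h | h)
      · have hf : (w1, w2) = (v1, v2) := congrArg Prod.fst h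
        have hs : wb = false := congrArg Prod.snd h
        exact Or.inr ⟨rfl, hs, Or.inl hf.symm⟩
      · have hf : (w1, w2) = (v1 + 1, v2) := congrArg Prod.fst h
        have hs : wb = false := congrArg Prod.snd h
        injection hf with a b
        refine Or.inr ⟨rfl, hs, Or.inr (Or.inl ?_)⟩
        rw [a, b, add_sub_cancel_right]
      · have hf : (w1, w2) = (v1, v2 + 1) := congrArg Prod.fst h
        have hs : wb = false := congrArg Prod.snd h
        injection hf with a b
        refine Or.inr ⟨rfl, hs, Or.inr (Or.inr ?_)⟩
        rw [a, b, add_sub_cancel_right]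
    · rintro (⟨hfalse, -, -⟩ | ⟨-, hb, h⟩)
      · exact absurd hfalse (by simp)
      · have hb' : wb = false := hb
        subst hb'
        rcases h with h | h | h
        · have h' : (v1, v2) = (w1, w2) := h
          refine Or.inl ?_
          injection h' with a b
          subst a; subst b; rfl
        · have h' : (v1, v2) = (w1 - 1, w2) := h
          refine Or.inr (Or.inl ?_)
          injection h' with a b
          have hw1 : w1 = v1 + 1 := by rw [a]; ring
          rw [hw1, b]
        · have h' : (v1, v2) = (w1, w2 - 1) := h
          refine Or.inr (Or.inr ?_)
          injection h' with a b
          have hw2 : w2 = v2 + 1 := by rw [b]; ring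
          rw [hw2, a]

lemma card_triple {α : Type*} [DecidableEq α] {a b c : α}
    (hab : a ≠ b) (hac : a ≠ c) (hbc : b ≠ c) : ({a, b, c} : Finset α).card = 3 := by
  rw [Finset.card_insert_of_notMem (by simp [hab, hac]),
     Finset.card_insert_of_notMem (by simp [hbc]), Finset.card_singleton]

lemma card_hexNbrs {L : ℕ} (hL2 : 2 ≤ L) (v : Site L) : (hexNbrs L v).card = 3 := by
  haveI : Fact (1 < L) := ⟨by omega⟩
  have h1 : (1 : ZMod L) ≠ 0 := one_ne_zero
  have hsub : ∀ a : ZMod L, a - 1 ≠ a := by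
    intro a h
    apply h1
    have h2 := congrArg (fun x => a - x) h
    simpa using h2.symm
  have hadd : ∀ a : ZMod L, a + 1 ≠ a := by
    intro a h
    apply h1
    have h2 : a + 1 = a + 0 := by rw [h, add_zero]
    exact add_left_cancel h2
  obtain ⟨⟨v1, v2⟩, vb⟩ := v
  cases vb
  · have hset : hexNbrs L ((v1, v2), false)
        = {((v1, v2), true), ((v1 - 1, v2), true), ((v1, v2 - 1), true)} := rfl
    rw [hset]
    refine card_triple ?_ ?_ ?_
    · intro h; exact hsub v1 (congrArg (fun p => p.1.1) h).symm
    · intro h; exact hsub v2 (congrArg (fun p => p.1.2) h).symm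
    · intro h; exact hsub v1 (congrArg (fun p => p.1.1) h)
  · have hset : hexNbrs L ((v1, v2), true)
        = {((v1, v2), false), ((v1 + 1, v2), false), ((v1, v2 + 1), false)} := rfl
    rw [hset]
    refine card_triple ?_ ?_ ?_
    · intro h; exact hadd v1 (congrArg (fun p => p.1.1) h).symm
    · intro h; exact hadd v2 (congrArg (fun p => p.1.2) h).symm
    · intro h; exact hadd v1 (congrArg (fun p => p.1.1) h)

/-- The three edges (as pairs with up-triangle first) incident to a site. -/
def hexEdgesAt (L : ℕ) (v : Site L) : Finset (Site L × Site L) :=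
  if v.2 = false then (hexNbrs L v).image (fun w => (v, w))
  else (hexNbrs L v).image (fun w => (w, v))

lemma card_hexEdgesAt {L : ℕ} (hL2 : 2 ≤ L) (v : Site L) : (hexEdgesAt L v).card = 3 := by
  by_cases hv : v.2 = false
  · rw [hexEdgesAt, if_pos hv,
      Finset.card_image_of_injective _ (fun a b h => (Prod.ext_iff.mp h).2),
      card_hexNbrs hL2]
  · rw [hexEdgesAt, if_neg hv,
      Finset.card_image_of_injective _ (fun a b h => (Prod.ext_iff.mp h).1),
      card_hexNbrs hL2]

lemma mem_hexEdgesAt {L : ℕ} {v : Site L} {e : Site L × Site L} :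
    e ∈ hexEdgesAt L v ↔
      (v.2 = false ∧ e.1 = v ∧ hexAdj v e.2) ∨ (v.2 = true ∧ e.2 = v ∧ hexAdj v e.1) := by
  obtain ⟨x, y⟩ := e
  by_cases hv : v.2 = false
  · rw [hexEdgesAt, if_pos hv, Finset.mem_image]
    constructor
    · rintro ⟨w, hw, heq⟩
      have hx : x = v := (congrArg Prod.fst heq).symm
      have hy : y = w := (congrArg Prod.snd heq).symm
      subst hx; subst hy
      exact Or.inl ⟨hv, rfl, (mem_hexNbrs _ _).mp hw⟩
    · rintro (⟨-, h1, h2⟩ | ⟨hv', -, -⟩)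
      · exact ⟨y, (mem_hexNbrs _ _).mpr h2, Prod.ext h1.symm rfl⟩
      · rw [hv] at hv'; exact Bool.noConfusion hv'
  · have hv' : v.2 = true := by revert hv; cases v.2 <;> simp
    rw [hexEdgesAt, if_neg hv, Finset.mem_image]
    constructor
    · rintro ⟨w, hw, heq⟩
      have hy : y = v := (congrArg Prod.snd heq).symm
      have hx : x = w := (congrArg Prod.fst heq).symm
      subst hy; subst hx
      exact Or.inr ⟨hv', rfl, (mem_hexNbrs _ _).mp hw⟩
    · rintro (⟨h1, -, -⟩ | ⟨-, h1, h2⟩)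
      · exact absurd h1 hv
      · exact ⟨x, (mem_hexNbrs _ _).mpr h2, Prod.ext rfl h1.symm⟩

/-- An independent (i.e. pairwise non-adjacent) set of sites. -/
def HexIndep (L : ℕ) (F : Finset (Site L)) : Prop :=
  ∀ x ∈ F, ∀ y ∈ F, ¬ hexAdj x y

/-- The configuration flipping exactly the sites of `F` to the spin `1`. -/
def hexConfOf (L q : ℕ) (hq : 2 ≤ q) (F : Finset (Site L)) : Conf L q :=
  fun v => if v ∈ F then ⟨1, by omega⟩ else ⟨0, by omega⟩

lemma hexConfOf_spin_ne {hq : 2 ≤ q} : (⟨1, by omega⟩ : Fin q) ≠ ⟨0, by omega⟩ :=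
  fun h => absurd (congrArg Fin.val h) one_ne_zero

lemma ham_hexConfOf [NeZero L] (hL2 : 2 ≤ L) (hq : 2 ≤ q) (F : Finset (Site L))
    (hF : HexIndep L F) : Ham L q (hexConfOf L q hq F) = 3 * F.card := by
  classical
  set σ := hexConfOf L q hq F with hσ
  have hcard : Ham L q σ =
      (univ.filter (fun e : Site L × Site L =>
        e.1.2 = false ∧ hexAdj e.1 e.2 ∧ σ e.1 ≠ σ e.2)).card := by
    rw [Ham, Nat.card_eq_fintype_card, Fintype.card_subtype]
  have hmem : ∀ v, σ v = if v ∈ F then (⟨1, by omega⟩ : Fin q) else ⟨0, by omega⟩ :=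
    fun v => rfl
  have hset : (univ.filter (fun e : Site L × Site L =>
      e.1.2 = false ∧ hexAdj e.1 e.2 ∧ σ e.1 ≠ σ e.2)) = F.biUnion (hexEdgesAt L) := by
    ext ⟨x, y⟩
    simp only [mem_filter, mem_univ, true_and, mem_biUnion]
    constructor
    · rintro ⟨hx2, hadj, hne⟩
      by_cases hxF : x ∈ F <;> by_cases hyF : y ∈ F
      · exact absurd (by rw [hmem, hmem, if_pos hxF, if_pos hyF]) hne
      · exact ⟨x, hxF, mem_hexEdgesAt.mpr (Or.inl ⟨hx2, rfl, hadj⟩)⟩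
      · have hy2 : y.2 = true := by
          rcases hadj with ⟨-, h, -⟩ | ⟨h, -, -⟩
          · exact h
          · rw [hx2] at h; exact Bool.noConfusion h
        exact ⟨y, hyF, mem_hexEdgesAt.mpr (Or.inr ⟨hy2, rfl, hexAdj_symm hadj⟩)⟩
      · exact absurd (by rw [hmem, hmem, if_neg hxF, if_neg hyF]) hne
    · rintro ⟨v, hvF, hve⟩
      rcases mem_hexEdgesAt.mp hve with ⟨hv2, h1, hadj⟩ | ⟨hv2, h1, hadj⟩
      · -- x = v is the up endpoint, in F
        subst h1
        have hyF : y ∉ F := fun hyF => hF x hvF y hyF hadj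
        refine ⟨hv2, hadj, ?_⟩
        rw [hmem, hmem, if_pos hvF, if_neg hyF]
        exact hexConfOf_spin_ne (hq := hq)
      · -- y = v is the down endpoint, in F
        subst h1
        have hxF : x ∉ F := fun hxF => hF y hvF x hxF hadj
        have hx2 : x.2 = false := by
          rcases hadj with ⟨h, -, -⟩ | ⟨-, h, -⟩
          · rw [hv2] at h; exact Bool.noConfusion h
          · exact h
        refine ⟨hx2, hexAdj_symm hadj, ?_⟩
        rw [hmem, hmem, if_neg hxF, if_pos hvF]
        exact (hexConfOf_spin_ne (hq := hq)).symm
  have hdisj : ∀ v ∈ F, ∀ w ∈ F, v ≠ w → Disjoint (hexEdgesAt L v) (hexEdgesAt L w) := by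
    intro v hv w hw hvw
    rw [Finset.disjoint_left]
    intro e hev hew
    rcases mem_hexEdgesAt.mp hev with ⟨-, h1, hadj⟩ | ⟨-, h1, hadj⟩ <;>
      rcases mem_hexEdgesAt.mp hew with ⟨-, h1', hadj'⟩ | ⟨-, h1', hadj'⟩
    · exact hvw (h1.symm.trans h1')
    · rw [h1'] at hadj
      exact hF v hv w hw hadj
    · rw [h1'] at hadj
      exact hF v hv w hw hadj
    · exact hvw (h1.symm.trans h1')
  rw [hcard, hset, Finset.card_biUnion hdisj]
  rw [Finset.sum_congr rfl (fun v _ => card_hexEdgesAt hL2 v), Finset.sum_const,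
    smul_eq_mul, mul_comm]

/-- Independent sets of a given size. -/
noncomputable def hexIset (L : ℕ) [NeZero L] (j : ℕ) : Finset (Finset (Site L)) :=
  univ.filter (fun F => F.card = j ∧ HexIndep L F)

/-- Sites that can extend an independent set. -/
noncomputable def hexGood (L : ℕ) [NeZero L] (F : Finset (Site L)) : Finset (Site L) :=
  univ.filter (fun v => v ∉ F ∧ ∀ w ∈ F, ¬ hexAdj v w ∧ ¬ hexAdj w v)

lemma card_site (L : ℕ) [NeZero L] : Fintype.card (Site L) = 2 * L ^ 2 := by
  simp only [Fintype.card_prod, ZMod.card, Fintype.card_bool]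
  ring

lemma hexGood_card_lower {L : ℕ} [NeZero L] (hL2 : 2 ≤ L) (F : Finset (Site L)) :
    2 * L ^ 2 ≤ (hexGood L F).card + 4 * F.card := by
  classical
  have hsplit := Finset.card_filter_add_card_filter_not
    (s := (univ : Finset (Site L)))
    (p := fun v => v ∉ F ∧ ∀ w ∈ F, ¬ hexAdj v w ∧ ¬ hexAdj w v)
  have hsub : univ.filter (fun v : Site L =>
      ¬(v ∉ F ∧ ∀ w ∈ F, ¬ hexAdj v w ∧ ¬ hexAdj w v)) ⊆
      F.biUnion (fun w => insert w (hexNbrs L w)) := by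
    intro v hv
    simp only [mem_filter, mem_univ, true_and] at hv
    by_cases hvF : v ∈ F
    · exact mem_biUnion.mpr ⟨v, hvF, mem_insert_self _ _⟩
    · have hex : ∃ w ∈ F, hexAdj v w ∨ hexAdj w v := by
        by_contra hc
        push_neg at hc
        exact hv ⟨hvF, hc⟩
      obtain ⟨w, hw, hadj⟩ := hex
      refine mem_biUnion.mpr ⟨w, hw, mem_insert_of_mem ?_⟩
      rcases hadj with h | h
      · exact (mem_hexNbrs w v).mpr (hexAdj_symm h)
      · exact (mem_hexNbrs w v).mpr h
  have hb : (F.biUnion (fun w => insert w (hexNbrs L w))).card ≤ 4 * F.card := by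
    refine le_trans Finset.card_biUnion_le ?_
    calc ∑ w ∈ F, (insert w (hexNbrs L w)).card
        ≤ ∑ _w ∈ F, 4 := by
          refine Finset.sum_le_sum (fun w _ => ?_)
          refine le_trans (Finset.card_insert_le _ _) ?_
          rw [card_hexNbrs hL2]
      _ = 4 * F.card := by rw [Finset.sum_const, smul_eq_mul, mul_comm]
  have hneg := Finset.card_le_card hsub
  have hu : (univ : Finset (Site L)).card = 2 * L ^ 2 := by
    rw [Finset.card_univ, card_site]
  rw [hu] at hsplit
  have : (hexGood L F).card = (univ.filter (fun v : Site L =>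
      v ∉ F ∧ ∀ w ∈ F, ¬ hexAdj v w ∧ ¬ hexAdj w v)).card := rfl
  omega

lemma hexIset_step {L : ℕ} [NeZero L] (hL2 : 2 ≤ L) (j : ℕ) :
    (hexIset L j).card * (2 * L ^ 2 - 4 * j) ≤ (hexIset L (j + 1)).card * (j + 1) := by
  classical
  set D := (hexIset L j).biUnion (fun F => (hexGood L F).image (fun v => (F, v))) with hD
  set T := (hexIset L (j + 1)).biUnion (fun F => F.image (fun v => (F, v))) with hT
  have hdisjD : ∀ F ∈ hexIset L j, ∀ G ∈ hexIset L j, F ≠ G →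
      Disjoint ((hexGood L F).image (fun v => (F, v))) ((hexGood L G).image (fun v => (G, v))) := by
    intro F _ G _ hFG
    rw [Finset.disjoint_left]
    rintro p hp hq'
    obtain ⟨v, -, rfl⟩ := Finset.mem_image.mp hp
    obtain ⟨w, -, hw⟩ := Finset.mem_image.mp hq'
    exact hFG ((congrArg Prod.fst hw).symm)
  have hdisjT : ∀ F ∈ hexIset L (j + 1), ∀ G ∈ hexIset L (j + 1), F ≠ G →
      Disjoint (F.image (fun v => (F, v))) (G.image (fun v => (G, v))) := by
    intro F _ G _ hFG
    rw [Finset.disjoint_left]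
    rintro p hp hq'
    obtain ⟨v, -, rfl⟩ := Finset.mem_image.mp hp
    obtain ⟨w, -, hw⟩ := Finset.mem_image.mp hq'
    exact hFG ((congrArg Prod.fst hw).symm)
  have hDcard : (hexIset L j).card * (2 * L ^ 2 - 4 * j) ≤ D.card := by
    rw [hD, Finset.card_biUnion hdisjD]
    have h1 : ∀ F ∈ hexIset L j,
        ((hexGood L F).image (fun v => (F, v))).card = (hexGood L F).card := fun F _ =>
      Finset.card_image_of_injective _ (fun a b h => (Prod.ext_iff.mp h).2)
    rw [Finset.sum_congr rfl h1]
    calc (hexIset L j).card * (2 * L ^ 2 - 4 * j)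
        = ∑ _F ∈ hexIset L j, (2 * L ^ 2 - 4 * j) := by
          rw [Finset.sum_const, smul_eq_mul]
      _ ≤ ∑ F ∈ hexIset L j, (hexGood L F).card := by
          refine Finset.sum_le_sum (fun F hF => ?_)
          have hcF : F.card = j := (Finset.mem_filter.mp hF).2.1
          have := hexGood_card_lower hL2 F
          omega
  have hTcard : T.card = (hexIset L (j + 1)).card * (j + 1) := by
    rw [hT, Finset.card_biUnion hdisjT]
    have h1 : ∀ F ∈ hexIset L (j + 1), (F.image (fun v => (F, v))).card = j + 1 := by
      intro F hF
      rw [Finset.card_image_of_injective _ (fun a b h => (Prod.ext_iff.mp h).2)]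
      exact (Finset.mem_filter.mp hF).2.1
    rw [Finset.sum_congr rfl h1, Finset.sum_const, smul_eq_mul]
  have hDT : D.card ≤ T.card := by
    refine Finset.card_le_card_of_injOn (fun p => (insert p.2 p.1, p.2)) ?_ ?_
    · intro p hp
      obtain ⟨F, hF, hpF⟩ := Finset.mem_biUnion.mp hp
      obtain ⟨v, hv, rfl⟩ := Finset.mem_image.mp hpF
      obtain ⟨-, hvnF, hall⟩ :
          v ∈ univ ∧ v ∉ F ∧ ∀ w ∈ F, ¬ hexAdj v w ∧ ¬ hexAdj w v := by
        simpa [hexGood, Finset.mem_filter] using hv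
      have hFj : F.card = j := (Finset.mem_filter.mp hF).2.1
      have hFind : HexIndep L F := (Finset.mem_filter.mp hF).2.2
      have hnew : insert v F ∈ hexIset L (j + 1) := by
        refine Finset.mem_filter.mpr ⟨Finset.mem_univ _, ?_, ?_⟩
        · rw [Finset.card_insert_of_notMem hvnF, hFj]
        · intro x hx y hy
          rcases Finset.mem_insert.mp hx with hxv | hxF
          · subst hxv
            rcases Finset.mem_insert.mp hy with hyv | hyF
            · subst hyv
              exact hexAdj_irrefl _
            · exact (hall y hyF).1
          · rcases Finset.mem_insert.mp hy with hyv | hyF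
            · subst hyv
              exact (hall x hxF).2
            · exact hFind x hxF y hyF
      exact Finset.mem_biUnion.mpr ⟨insert v F, hnew,
        Finset.mem_image.mpr ⟨v, Finset.mem_insert_self _ _, rfl⟩⟩
    · intro p hp p' hp' heq
      obtain ⟨F, hF, hpF⟩ := Finset.mem_biUnion.mp hp
      obtain ⟨v, hv, rfl⟩ := Finset.mem_image.mp hpF
      obtain ⟨F', hF', hpF'⟩ := Finset.mem_biUnion.mp hp'
      obtain ⟨v', hv', rfl⟩ := Finset.mem_image.mp hpF'
      have hvnF : v ∉ F := ((Finset.mem_filter.mp hv).2).1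
      have hvnF' : v' ∉ F' := ((Finset.mem_filter.mp hv').2).1
      have h2 : v = v' := congrArg Prod.snd heq
      have h1 : insert v F = insert v' F' := congrArg Prod.fst heq
      subst h2
      have : F = F' := by
        have := congrArg (fun s => Finset.erase s v) h1
        simpa [Finset.erase_insert hvnF, Finset.erase_insert hvnF'] using this
      rw [this]
  calc (hexIset L j).card * (2 * L ^ 2 - 4 * j) ≤ D.card := hDcard
    _ ≤ T.card := hDT
    _ = (hexIset L (j + 1)).card * (j + 1) := hTcard

lemma hexIset_card_lower {L : ℕ} [NeZero L] (hL2 : 2 ≤ L) :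
    ∀ j : ℕ, 4 ^ j * ((L ^ 2 / 2).choose j) ≤ (hexIset L j).card := by
  intro j
  induction j with
  | zero =>
      have : (∅ : Finset (Site L)) ∈ hexIset L 0 := by
        refine Finset.mem_filter.mpr ⟨Finset.mem_univ _, Finset.card_empty, ?_⟩
        intro x hx
        exact absurd hx (Finset.notMem_empty x)
      simpa using Finset.card_pos.mpr ⟨∅, this⟩
  | succ j IH =>
      by_cases hjM : j < L ^ 2 / 2
      · have hstep := hexIset_step hL2 j
        have hdiv : (L ^ 2 / 2) * 2 ≤ L ^ 2 := Nat.div_mul_le_self _ _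
        have h3 : 4 * (L ^ 2 / 2 - j) ≤ 2 * L ^ 2 - 4 * j := by omega
        have hkey : (4 ^ (j + 1) * ((L ^ 2 / 2).choose (j + 1))) * (j + 1) ≤
            (hexIset L (j + 1)).card * (j + 1) := by
          calc (4 ^ (j + 1) * ((L ^ 2 / 2).choose (j + 1))) * (j + 1)
              = 4 ^ j * 4 * (((L ^ 2 / 2).choose (j + 1)) * (j + 1)) := by ring
            _ = 4 ^ j * 4 * (((L ^ 2 / 2).choose j) * (L ^ 2 / 2 - j)) := by
                rw [Nat.choose_succ_right_eq]
            _ = (4 ^ j * ((L ^ 2 / 2).choose j)) * (4 * (L ^ 2 / 2 - j)) := by ring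
            _ ≤ (hexIset L j).card * (2 * L ^ 2 - 4 * j) := Nat.mul_le_mul IH h3
            _ ≤ (hexIset L (j + 1)).card * (j + 1) := hstep
        exact Nat.le_of_mul_le_mul_right hkey (by omega)
      · have : (L ^ 2 / 2).choose (j + 1) = 0 := Nat.choose_eq_zero_of_lt (by omega)
        simp [this]

end CountLower


/-- Lemma 4.2(2) (hexagonal lattice): for `1 ≤ j < ⌊L²/2⌋`,
`|X_{3j}| ≥ 4^j · C(⌊L²/2⌋, j)`. -/
theorem config_count_lower (q : ℕ) (hq : 2 ≤ q) (L : ℕ) (hL : 8 ≤ L)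
    (j : ℕ) (hj1 : 1 ≤ j) (hj2 : j < L ^ 2 / 2) :
    4 ^ j * (L ^ 2 / 2).choose j ≤ Nat.card {σ : Conf L q // Ham L q σ = 3 * j} := by
  classical
  haveI : NeZero L := ⟨by omega⟩
  have hL2 : 2 ≤ L := by omega
  have hcard : Nat.card {σ : Conf L q // Ham L q σ = 3 * j} =
      (Finset.univ.filter (fun σ : Conf L q => Ham L q σ = 3 * j)).card := by
    rw [Nat.card_eq_fintype_card, Fintype.card_subtype]
  rw [hcard]
  refine le_trans (hexIset_card_lower hL2 j) ?_
  refine Finset.card_le_card_of_injOn (fun F => hexConfOf L q hq F) ?_ ?_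
  · intro F hF
    obtain ⟨-, hFj, hFind⟩ : F ∈ Finset.univ ∧ F.card = j ∧ HexIndep L F := by
      simpa [hexIset] using hF
    exact Finset.mem_filter.mpr ⟨Finset.mem_univ _,
      by rw [ham_hexConfOf hL2 hq F hFind, hFj]⟩
  · intro F hF G hG heq
    ext v
    have hv := congrFun heq v
    simp only [hexConfOf] at hv
    by_cases h1 : v ∈ F <;> by_cases h2 : v ∈ G
    · simp [h1, h2]
    · rw [if_pos h1, if_neg h2] at hv
      exact absurd hv (hexConfOf_spin_ne (hq := hq))
    · rw [if_neg h1, if_pos h2] at hv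
      exact absurd hv.symm (hexConfOf_spin_ne (hq := hq))
    · simp [h1, h2]

end IsingHex
end

section
/- On the hexagonal lattice: every configuration σ ∈ X has at least 3L − H(σ) bridges. Moreover, if σ has exactly 3L − H(σ) bridges, then every strip is either a bridge or a semibridge of σ. -/
open scoped Classical BigOperators

namespace IsingHex

/-!
The two endpoints of an edge of `Λ` lie in exactly two common strips, so `∑ₛ ΔH_s = 2 H`.
Read along its cyclic order, a strip carries a cyclic word of length `2L` whose number of letter
changes is `ΔH_s`: it vanishes exactly on bridges, is at least `2` otherwise, and equals `2` only
when the word consists of two complementary arcs, i.e. on semibridges. Hence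
`2 H ≥ 2 (3L - #bridges)`, and equality forces every strip that is not a bridge to be a
semibridge.
-/

open Finset

section ChangePoints

variable {n : ℕ} {α : Type*}

lemma natCast_inj_of_lt {i j : ℕ} (hi : i < n) (hj : j < n) (h : (i : ZMod n) = j) : i = j := by
  rw [← ZMod.val_natCast_of_lt hi, ← ZMod.val_natCast_of_lt hj, h]

lemma apply_add_natCast_eq_of_forall_lt {f : ZMod n → α} {s : ZMod n} {m : ℕ}
    (h : ∀ j < m, f (s + j + 1) = f (s + j)) : ∀ j ≤ m, f (s + j) = f s := by
  intro j hj
  induction j with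
  | zero => simp
  | succ j ih => rw [Nat.cast_succ, ← add_assoc, h j hj, ih (by omega)]

variable [NeZero n]

lemma exists_natCast_lt_eq_add (s k : ZMod n) : ∃ j < n, k = s + j :=
  ⟨(k - s).val, ZMod.val_lt _, by rw [ZMod.natCast_zmod_val]; ring⟩

noncomputable def changePoints (f : ZMod n → α) : Finset (ZMod n) :=
  univ.filter fun k => f (k + 1) ≠ f k

lemma mem_changePoints {f : ZMod n → α} {k : ZMod n} :
    k ∈ changePoints f ↔ f (k + 1) ≠ f k := by
  simp [changePoints]

lemma two_le_card_changePoints {f : ZMod n → α} (hf : ∃ k k', f k ≠ f k') :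
    2 ≤ #(changePoints f) := by
  by_contra! hlt
  obtain ⟨x, hx⟩ := card_le_one_iff_subset_singleton.mp (Nat.le_of_lt_succ hlt)
  -- with at most one change point `x`, the run starting at `x + 1` covers the whole cycle
  have hrun : ∀ j ≤ n - 1, f (x + 1 + j) = f (x + 1) := by
    refine apply_add_natCast_eq_of_forall_lt fun j hj => not_not.mp fun hne => ?_
    have hjx : x + 1 + j = x := mem_singleton.mp (hx (mem_changePoints.mpr hne))
    have := natCast_inj_of_lt (i := j + 1) (j := 0) (by omega) (NeZero.pos n)
      (by push_cast; linear_combination hjx)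
    omega
  have hconst : ∀ k, f k = f (x + 1) := fun k => by
    obtain ⟨j, hj, rfl⟩ := exists_natCast_lt_eq_add (x + 1) k
    exact hrun j (by omega)
  obtain ⟨k, k', hkk'⟩ := hf
  exact hkk' ((hconst k).trans (hconst k').symm)

lemma exists_arcs_of_card_changePoints_eq_two {f : ZMod n → α} (h : #(changePoints f) = 2) :
    ∃ (a b : α) (s : ZMod n) (m : ℕ), a ≠ b ∧ 0 < m ∧ m < n ∧
      (∀ k, f k = a ∨ f k = b) ∧
      {k | f k = a} = (fun j : ℕ => s + j) '' Set.Iio m ∧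
      {k | f k = b} = (fun j : ℕ => s + m + j) '' Set.Iio (n - m) := by
  obtain ⟨x, y, hxy, hxy'⟩ := card_eq_two.mp h
  have hchange : ∀ k, f (k + 1) ≠ f k ↔ k = x ∨ k = y := fun k => by
    rw [← mem_changePoints, hxy', mem_insert, mem_singleton]
  obtain ⟨m, hmn, rfl⟩ := exists_natCast_lt_eq_add x y
  have hm0 : 0 < m := Nat.pos_of_ne_zero (by rintro rfl; simp at hxy)
  have hrun₁ : ∀ j ≤ m - 1, f (x + 1 + j) = f (x + 1) := by
    refine apply_add_natCast_eq_of_forall_lt fun j hj => not_not.mp fun hne => ?_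
    rcases (hchange _).mp hne with hjx | hjy
    · have := natCast_inj_of_lt (i := j + 1) (j := 0) (by omega) (NeZero.pos n)
        (by push_cast; linear_combination hjx)
      omega
    · have := natCast_inj_of_lt (i := j + 1) (j := m) (by omega) hmn
        (by push_cast; linear_combination hjy)
      omega
  have hrun₂ : ∀ j ≤ n - m - 1, f (x + 1 + m + j) = f (x + 1 + m) := by
    refine apply_add_natCast_eq_of_forall_lt fun j hj => not_not.mp fun hne => ?_
    rcases (hchange _).mp hne with hjx | hjy
    · have := natCast_inj_of_lt (i := m + j + 1) (j := 0) (by omega) (NeZero.pos n)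
        (by push_cast; linear_combination hjx)
      omega
    · have := natCast_inj_of_lt (i := j + 1) (j := 0) (by omega) (NeZero.pos n)
        (by push_cast; linear_combination hjy)
      omega
  have hab : f (x + 1) ≠ f (x + 1 + m) := by
    have hy := (hchange (x + m)).mpr (Or.inr rfl)
    have hlast := hrun₁ (m - 1) le_rfl
    rw [Nat.cast_sub (by omega), Nat.cast_one, add_add_sub_cancel] at hlast
    rw [hlast, add_right_comm] at hy
    exact hy.symm
  have hsplit : ∀ k, (∃ j < m, k = x + 1 + j) ∨ (∃ j < n - m, k = x + 1 + m + j) := by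
    intro k
    obtain ⟨j, hj, rfl⟩ := exists_natCast_lt_eq_add (x + 1) k
    by_cases hjm : j < m
    · exact Or.inl ⟨j, hjm, rfl⟩
    · refine Or.inr ⟨j - m, by omega, ?_⟩
      rw [Nat.cast_sub (by omega)]
      ring
  refine ⟨f (x + 1), f (x + 1 + m), x + 1, m, hab, hm0, hmn, fun k => ?_, ?_, ?_⟩
  · rcases hsplit k with ⟨j, hj, rfl⟩ | ⟨j, hj, rfl⟩
    · exact Or.inl (hrun₁ j (by omega))
    · exact Or.inr (hrun₂ j (by omega))
  · ext k
    refine ⟨fun hk => ?_, fun ⟨j, hj, hk⟩ => hk ▸ hrun₁ j (by simp at hj; omega)⟩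
    rcases hsplit k with ⟨j, hj, rfl⟩ | ⟨j, hj, rfl⟩
    · exact ⟨j, hj, rfl⟩
    · exact absurd (hk.symm.trans (hrun₂ j (by omega))) hab
  · ext k
    refine ⟨fun hk => ?_, fun ⟨j, hj, hk⟩ => hk ▸ hrun₂ j (by simp at hj; omega)⟩
    rcases hsplit k with ⟨j, hj, rfl⟩ | ⟨j, hj, rfl⟩
    · exact absurd ((hrun₁ j (by omega)).symm.trans hk) hab
    · exact ⟨j, hj, rfl⟩

end ChangePoints

section Strips

variable {L : ℕ}

def stripIndex (L : ℕ) (d : Fin 3) (v : Site L) : ZMod L :=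
  if d = 0 then v.1.2 else if d = 1 then v.1.1 else v.1.1 + v.1.2 + if v.2 then 1 else 0

lemma mem_stripSet_iff {d : Fin 3} {ℓ : ZMod L} {v : Site L} :
    v ∈ stripSet L d ℓ ↔ stripIndex L d v = ℓ := by
  obtain ⟨⟨x, y⟩, b⟩ := v
  fin_cases d
  · simp [stripSet, stripIndex]
  · simp [stripSet, stripIndex]
  · cases b <;> simp [stripSet, stripIndex, eq_sub_iff_add_eq]

/-- The triangle at position `t` along the strip `(d, ℓ)`. -/
def stripCell (L : ℕ) (d : Fin 3) (ℓ t : ZMod L) (b : Bool) : Site L :=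
  if d = 0 then ((t, ℓ), b) else if d = 1 then ((ℓ, t), b)
  else ((t, ℓ - t - if b then 1 else 0), b)

lemma stripCell_snd (d : Fin 3) (ℓ t : ZMod L) (b : Bool) : (stripCell L d ℓ t b).2 = b := by
  unfold stripCell; split_ifs <;> rfl

lemma stripCell_inj {d : Fin 3} {ℓ t t' : ZMod L} {b b' : Bool} :
    stripCell L d ℓ t b = stripCell L d ℓ t' b' ↔ t = t' ∧ b = b' := by
  fin_cases d <;> cases b <;> cases b' <;> simp [stripCell]

lemma stripIndex_stripCell (d : Fin 3) (ℓ t : ZMod L) (b : Bool) :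
    stripIndex L d (stripCell L d ℓ t b) = ℓ := by
  fin_cases d <;> cases b <;> simp [stripCell, stripIndex, add_assoc]

lemma exists_stripCell_eq {d : Fin 3} {v : Site L} :
    ∃ t b, stripCell L d (stripIndex L d v) t b = v := by
  obtain ⟨⟨x, y⟩, b⟩ := v
  fin_cases d
  · exact ⟨x, b, by simp [stripCell, stripIndex]⟩
  · exact ⟨y, b, by simp [stripCell, stripIndex]⟩
  · exact ⟨x, b, by cases b <;> simp [stripCell, stripIndex, add_assoc]⟩

lemma hexAdj_stripCell_iff [Fact (1 < L)] {d : Fin 3} {ℓ t u : ZMod L} {b : Bool} :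
    hexAdj (stripCell L d ℓ t false) (stripCell L d ℓ u b) ↔
      b = true ∧ (u = t ∨ u + 1 = t) := by
  fin_cases d
  · cases b <;> simp [stripCell, hexAdj, eq_sub_iff_add_eq]
  · cases b <;> simp [stripCell, hexAdj, eq_sub_iff_add_eq]
  cases b
  · simp [stripCell, hexAdj]
  simp only [hexAdj, stripCell, Fin.reduceFinMk, Fin.isValue, Fin.reduceEq, ↓reduceIte,
    Bool.false_eq_true, sub_zero, Prod.mk.injEq, eq_sub_iff_add_eq, sub_add_cancel, true_and,
    Bool.true_eq_false, false_and, and_self, or_false]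
  constructor
  · rintro (⟨rfl, h⟩ | ⟨rfl, -⟩ | ⟨rfl, -⟩)
    · exact absurd (by linear_combination -h : (1 : ZMod L) = 0) one_ne_zero
    · exact Or.inr rfl
    · exact Or.inl rfl
  · rintro (rfl | rfl)
    · exact Or.inr (Or.inr ⟨rfl, by ring⟩)
    · exact Or.inr (Or.inl ⟨rfl, by ring⟩)

def cycleCell (k : ZMod (2 * L)) : ZMod L × Bool :=
  (((k.val / 2 : ℕ) : ZMod L), decide (k.val % 2 = 1))

lemma stripCycle_eq (d : Fin 3) (ℓ : ZMod L) (k : ZMod (2 * L)) :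
    stripCycle L d ℓ k = stripCell L d ℓ (cycleCell k).1 (cycleCell k).2 := by
  fin_cases d
  · simp [stripCycle, stripCell, cycleCell]
  · simp [stripCycle, stripCell, cycleCell]
  · by_cases h : k.val % 2 = 1 <;> simp [stripCycle, stripCell, cycleCell, h, sub_right_comm]

lemma stripCycle_snd (d : Fin 3) (ℓ : ZMod L) (k : ZMod (2 * L)) :
    (stripCycle L d ℓ k).2 = (cycleCell k).2 := by
  rw [stripCycle_eq, stripCell_snd]

variable [NeZero L]

lemma cycleCell_injective : Function.Injective (cycleCell (L := L)) := by
  intro k k' h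
  simp only [cycleCell, Prod.mk.injEq, decide_eq_decide] at h
  have hk := ZMod.val_lt k
  have hk' := ZMod.val_lt k'
  have := natCast_inj_of_lt (n := L) (by omega) (by omega) h.1
  exact ZMod.val_injective _ (by omega)

lemma cycleCell_surjective : Function.Surjective (cycleCell (L := L)) := by
  rintro ⟨t, b⟩
  have ht := ZMod.val_lt t
  have hval : (((2 * t.val + b.toNat : ℕ)) : ZMod (2 * L)).val = 2 * t.val + b.toNat :=
    ZMod.val_natCast_of_lt (by cases b <;> simp <;> omega)
  refine ⟨(2 * t.val + b.toNat : ℕ), ?_⟩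
  rw [cycleCell, hval]
  cases b <;> simp [Nat.mul_add_div]

lemma cycleCell_add_one (k : ZMod (2 * L)) :
    cycleCell (k + 1) =
      if (cycleCell k).2 then ((cycleCell k).1 + 1, false) else ((cycleCell k).1, true) := by
  have : Fact (1 < 2 * L) := ⟨by have := NeZero.pos L; omega⟩
  have hk := ZMod.val_lt k
  have hval : (k + 1).val = (k.val + 1) % (2 * L) := by rw [ZMod.val_add, ZMod.val_one]
  by_cases hodd : k.val % 2 = 1
  · have h2 : (k.val + 1) % (2 * L) = 2 * ((k.val / 2 + 1) % L) := by
      rw [show k.val + 1 = 2 * (k.val / 2 + 1) by omega, Nat.mul_mod_mul_left]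
    have hmod : (((k.val / 2 + 1) % L : ℕ) : ZMod L) = ((k.val / 2 + 1 : ℕ) : ZMod L) :=
      (ZMod.natCast_eq_natCast_iff _ _ _).mpr (Nat.mod_modEq _ _)
    simp [cycleCell, hval, h2, hodd, hmod]
  · have h2 : (k.val + 1) % (2 * L) = k.val + 1 := Nat.mod_eq_of_lt (by omega)
    simp only [cycleCell, hval, h2, show (k.val + 1) / 2 = k.val / 2 by omega, hodd, decide_false,
      Bool.false_eq_true, ↓reduceIte, Prod.mk.injEq, decide_eq_true_eq, true_and]
    omega

lemma cycleCell_add_one_snd (k : ZMod (2 * L)) : (cycleCell (k + 1)).2 = !(cycleCell k).2 := by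
  rw [cycleCell_add_one]; cases (cycleCell k).2 <;> rfl

lemma stripCycle_injective (d : Fin 3) (ℓ : ZMod L) : Function.Injective (stripCycle L d ℓ) :=
  fun k k' h => cycleCell_injective <| Prod.ext_iff.mpr <| by
    rwa [stripCycle_eq, stripCycle_eq, stripCell_inj] at h

lemma range_stripCycle (d : Fin 3) (ℓ : ZMod L) :
    Set.range (stripCycle L d ℓ) = stripSet L d ℓ := by
  ext v
  rw [Set.mem_range, mem_stripSet_iff]
  constructor
  · rintro ⟨k, rfl⟩
    rw [stripCycle_eq, stripIndex_stripCell]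
  · rintro rfl
    obtain ⟨t, b, hv⟩ := exists_stripCell_eq (d := d) (v := v)
    obtain ⟨k, hk⟩ := cycleCell_surjective (L := L) (t, b)
    exact ⟨k, by rw [stripCycle_eq, hk, hv]⟩

lemma stripCycle_mem (d : Fin 3) (ℓ : ZMod L) (k : ZMod (2 * L)) :
    stripCycle L d ℓ k ∈ stripSet L d ℓ :=
  range_stripCycle d ℓ ▸ Set.mem_range_self k

lemma hexAdj_stripCycle_iff [Fact (1 < L)] {d : Fin 3} {ℓ : ZMod L} {k k' : ZMod (2 * L)}
    (hk : (cycleCell k).2 = false) :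
    hexAdj (stripCycle L d ℓ k) (stripCycle L d ℓ k') ↔ k' = k + 1 ∨ k = k' + 1 := by
  rw [← cycleCell_injective.eq_iff, ← cycleCell_injective.eq_iff (a := k), cycleCell_add_one,
    cycleCell_add_one, stripCycle_eq, stripCycle_eq, hk]
  obtain ⟨t, b⟩ := cycleCell k'
  rw [hexAdj_stripCell_iff]
  cases b <;> simp [Prod.ext_iff, hk, @eq_comm _ (cycleCell k).1]

end Strips

section Energy

variable {L q : ℕ} [Fact (1 < L)] (σ : Conf L q) (d : Fin 3) (ℓ : ZMod L)

lemma two_ne_zero_zmod_two_mul : (2 : ZMod (2 * L)) ≠ 0 := fun h => by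
  have hL := Fact.out (p := 1 < L)
  have := natCast_inj_of_lt (n := 2 * L) (i := 2) (j := 0) (by omega) (by omega)
    (by exact_mod_cast h)
  omega

lemma stripEnergy_eq_card_changePoints :
    stripEnergy L q σ d ℓ = #(changePoints (σ ∘ stripCycle L d ℓ)) := by
  rw [stripEnergy, Nat.card_eq_fintype_card, Fintype.card_subtype]
  symm
  -- the `k`-th step of the cycle, oriented from its up-triangle
  refine card_bij (fun k _ => if (cycleCell k).2
      then (stripCycle L d ℓ (k + 1), stripCycle L d ℓ k)
      else (stripCycle L d ℓ k, stripCycle L d ℓ (k + 1))) ?_ ?_ ?_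
  · intro k hk
    rw [mem_changePoints, Function.comp_apply, Function.comp_apply] at hk
    rw [mem_filter]
    refine ⟨mem_univ _, ?_⟩
    cases hb : (cycleCell k).2 <;> simp only [Bool.false_eq_true, if_false, if_true]
    · refine ⟨by rw [stripCycle_snd, hb], stripCycle_mem .., stripCycle_mem .., ?_, Ne.symm hk⟩
      exact (hexAdj_stripCycle_iff hb).mpr (Or.inl rfl)
    · have hb' : (cycleCell (k + 1)).2 = false := by rw [cycleCell_add_one_snd, hb]; rfl
      refine ⟨by rw [stripCycle_snd, hb'], stripCycle_mem .., stripCycle_mem .., ?_, hk⟩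
      exact (hexAdj_stripCycle_iff hb').mpr (Or.inr rfl)
  · intro k _ k' _ h
    have inj := stripCycle_injective (L := L) d ℓ
    cases hb : (cycleCell k).2 <;> cases hb' : (cycleCell k').2 <;>
      simp only [hb, hb', Prod.mk.injEq, Bool.false_eq_true, if_false, if_true] at h
    · exact inj h.1
    · have h1 := inj h.1; have h2 := inj h.2
      exact absurd (by linear_combination h2 - h1) two_ne_zero_zmod_two_mul
    · have h1 := inj h.1; have h2 := inj h.2
      exact absurd (by linear_combination h1 - h2) two_ne_zero_zmod_two_mul
    · exact inj h.2
  · rintro ⟨v, w⟩ he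
    obtain ⟨-, hv, hvs, hws, hadj, hvw⟩ := mem_filter.mp he
    obtain ⟨k, rfl⟩ := (range_stripCycle d ℓ).symm ▸ hvs
    obtain ⟨k', rfl⟩ := (range_stripCycle d ℓ).symm ▸ hws
    rw [stripCycle_snd] at hv
    rcases (hexAdj_stripCycle_iff hv).mp hadj with rfl | rfl
    · exact ⟨k, mem_changePoints.mpr (Ne.symm hvw), by simp [hv]⟩
    · have hb' : (cycleCell k').2 = true := by
        simpa [cycleCell_add_one_snd] using hv
      exact ⟨k', mem_changePoints.mpr hvw, by simp [hb']⟩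

lemma two_le_stripEnergy_of_not_isBridge (h : ¬ IsBridge L q σ d ℓ) :
    2 ≤ stripEnergy L q σ d ℓ := by
  rw [stripEnergy_eq_card_changePoints]
  refine two_le_card_changePoints ?_
  by_contra! hc
  refine h ⟨σ (stripCycle L d ℓ 0), fun v hv => ?_⟩
  obtain ⟨k, rfl⟩ := (range_stripCycle d ℓ).symm ▸ hv
  exact hc k 0

lemma isSemibridge_of_stripEnergy_eq_two (h : stripEnergy L q σ d ℓ = 2) :
    IsSemibridge L q σ d ℓ := by
  rw [stripEnergy_eq_card_changePoints] at h
  obtain ⟨a, b, s, m, hab, hm0, hmn, hcover, harc_a, harc_b⟩ :=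
    exists_arcs_of_card_changePoints_eq_two h
  have hlevel : ∀ c, {v ∈ stripSet L d ℓ | σ v = c} =
      stripCycle L d ℓ '' {k | (σ ∘ stripCycle L d ℓ) k = c} := fun c => by
    rw [← range_stripCycle d ℓ]
    exact Set.image_preimage_eq_range_inter.symm
  have hs : s ∈ {k | (σ ∘ stripCycle L d ℓ) k = a} := harc_a ▸ ⟨0, hm0, by simp⟩
  have hsm : s + m ∈ {k | (σ ∘ stripCycle L d ℓ) k = b} :=
    harc_b ▸ ⟨0, Set.mem_Iio.mpr (by omega), by simp⟩
  refine ⟨a, b, hab, fun v hv => ?_, ⟨_, stripCycle_mem d ℓ s, hs⟩,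
    ⟨_, stripCycle_mem d ℓ (s + m), hsm⟩, ⟨s, m, ?_⟩, ⟨s + m, 2 * L - m, ?_⟩⟩
  · obtain ⟨k, rfl⟩ := (range_stripCycle d ℓ).symm ▸ hv
    exact hcover k
  · rw [hlevel, harc_a, Set.image_image]
  · rw [hlevel, harc_b, Set.image_image]

lemma card_stripIndex_eq_of_hexAdj {v w : Site L} (hv : v.2 = false) (h : hexAdj v w) :
    #(univ.filter fun d : Fin 3 => stripIndex L d v = stripIndex L d w) = 2 := by
  obtain ⟨⟨x, y⟩, b⟩ := v
  obtain ⟨⟨x', y'⟩, b'⟩ := w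
  obtain rfl : b = false := hv
  obtain ⟨-, rfl, ⟨rfl, rfl⟩ | ⟨rfl, rfl⟩ | ⟨rfl, rfl⟩⟩ | ⟨h, -⟩ := h
  · rw [card_filter, Fin.sum_univ_three]; simp [stripIndex]
  · rw [card_filter, Fin.sum_univ_three]
    simp [stripIndex, eq_sub_iff_add_eq, show x - 1 + y + 1 = x + y by ring]
  · rw [card_filter, Fin.sum_univ_three]
    simp [stripIndex, eq_sub_iff_add_eq, show x + (y - 1) + 1 = x + y by ring]
  · simp_all

lemma card_strips_containing_edge {v w : Site L} (hv : v.2 = false) (h : hexAdj v w) :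
    #(univ.filter fun p : Fin 3 × ZMod L =>
      v ∈ stripSet L p.1 p.2 ∧ w ∈ stripSet L p.1 p.2) = 2 := by
  rw [← card_stripIndex_eq_of_hexAdj hv h]
  refine card_nbij' Prod.fst (fun d => (d, stripIndex L d v)) ?_ ?_ ?_ ?_ <;>
    rintro ⟨d, ℓ⟩ <;> simp +contextual [mem_stripSet_iff]

lemma sum_stripEnergy : ∑ p : Fin 3 × ZMod L, stripEnergy L q σ p.1 p.2 = 2 * Ham L q σ := by
  set E := univ.filter fun e : Site L × Site L =>
    e.1.2 = false ∧ hexAdj e.1 e.2 ∧ σ e.1 ≠ σ e.2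
  have hstrip : ∀ p : Fin 3 × ZMod L, stripEnergy L q σ p.1 p.2 =
      ∑ e ∈ E, if e.1 ∈ stripSet L p.1 p.2 ∧ e.2 ∈ stripSet L p.1 p.2 then 1 else 0 := by
    intro p
    rw [stripEnergy, Nat.card_eq_fintype_card, Fintype.card_subtype, ← card_filter, filter_filter]
    congr 1
    ext e
    simp only [mem_filter, mem_univ, true_and]
    tauto
  have hedge : ∀ e ∈ E,
      ∑ p : Fin 3 × ZMod L,
        (if e.1 ∈ stripSet L p.1 p.2 ∧ e.2 ∈ stripSet L p.1 p.2 then 1 else 0) = 2 := by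
    intro e he
    obtain ⟨hv, hadj, -⟩ := (mem_filter.mp he).2
    rw [← card_filter, card_strips_containing_edge hv hadj]
  rw [Ham, Nat.card_eq_fintype_card, Fintype.card_subtype, sum_congr rfl fun p _ => hstrip p,
    sum_comm, sum_congr rfl hedge, sum_const, smul_eq_mul, mul_comm]

end Energy

theorem bridge_count_lower_general (L q : ℕ) (hL : 8 ≤ L) (σ : Conf L q) :
    3 * L ≤ Ham L q σ + Nat.card {p : Fin 3 × ZMod L // IsBridge L q σ p.1 p.2} ∧
    ((Nat.card {p : Fin 3 × ZMod L // IsBridge L q σ p.1 p.2} : ℤ) =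
        3 * L - (Ham L q σ : ℤ) →
      ∀ (d : Fin 3) (ℓ : ZMod L), IsBridge L q σ d ℓ ∨ IsSemibridge L q σ d ℓ) := by
  have : Fact (1 < L) := ⟨by omega⟩
  rw [Nat.card_eq_fintype_card, Fintype.card_subtype]
  set B := #(univ.filter fun p : Fin 3 × ZMod L => IsBridge L q σ p.1 p.2)
  set w : Fin 3 × ZMod L → ℕ := fun p =>
    stripEnergy L q σ p.1 p.2 + if IsBridge L q σ p.1 p.2 then 2 else 0
  have hsum : ∑ p, w p = 2 * (Ham L q σ + B) := by
    rw [sum_add_distrib, sum_stripEnergy, ← sum_filter, sum_const, smul_eq_mul]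
    ring
  have hw : ∀ p, 2 ≤ w p := fun p => by
    by_cases hb : IsBridge L q σ p.1 p.2
    · simp [w, hb]
    · simpa [w, hb] using two_le_stripEnergy_of_not_isBridge σ p.1 p.2 hb
  have hcard : ∑ _p : Fin 3 × ZMod L, 2 = 2 * (3 * L) := by
    rw [sum_const, card_univ, Fintype.card_prod, Fintype.card_fin, ZMod.card, smul_eq_mul]
    ring
  have hlower := sum_le_sum fun p (_ : p ∈ univ) => hw p
  refine ⟨by omega, fun heq d ℓ => ?_⟩
  have htight := (sum_eq_sum_iff_of_le fun p _ => hw p).mp (by omega) (d, ℓ) (mem_univ _)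
  by_cases hb : IsBridge L q σ d ℓ
  · exact Or.inl hb
  · exact Or.inr (isSemibridge_of_stripEnergy_eq_two σ d ℓ (by simpa [w, hb] using htight.symm))

/-- Lemma 5.3 (hexagonal lattice): every configuration `σ` has at least `3L - H(σ)`
bridges, and if it has exactly `3L - H(σ)` bridges then every strip is either
a bridge or a semibridge. -/
theorem bridge_count_lower (L q : ℕ) (hL : 8 ≤ L) (hq : 2 ≤ q) (σ : Conf L q) :
    3 * L ≤ Ham L q σ + Nat.card {p : Fin 3 × ZMod L // IsBridge L q σ p.1 p.2} ∧
    ((Nat.card {p : Fin 3 × ZMod L // IsBridge L q σ p.1 p.2} : ℤ) =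
        3 * L - (Ham L q σ : ℤ) →
      ∀ (d : Fin 3) (ℓ : ZMod L), IsBridge L q σ d ℓ ∨ IsSemibridge L q σ d ℓ) :=
  bridge_count_lower_general L q hL σ

end IsingHex
end
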